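/- arXiv:math/9811157 — 3 statements merged into one kernel-verified Lean document; each statement's English description precedes it below -/
import Mathlib

section
/- Let A_m ⊆ Ω_{n_m} be a sequence of events and set g_m = χ_{A_m}. Then {A_m} is asymptotically noise sensitive if and only if for every finite k, lim_{m→∞} Σ{ ĝ_m(S)² : S ⊆ [n_m], 1 ≤ |S| ≤ k } = 0. -/
namespace BKS

open Finset Filter

variable {ι : Type} [Fintype ι] [DecidableEq ι]

/-- Probability of an event under the uniform measure on `ι → Bool`. -/
noncomputable def cprob (A : Finset (ι → Bool)) : ℝ :=
  (A.card : ℝ) / 2 ^ Fintype.card ι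

/-- Expectation of a function under the uniform measure on `ι → Bool`. -/
noncomputable def cexpect (f : (ι → Bool) → ℝ) : ℝ :=
  (∑ x : ι → Bool, f x) / 2 ^ Fintype.card ι

/-- Real-valued indicator of an event. -/
noncomputable def indE (A : Finset (ι → Bool)) : (ι → Bool) → ℝ :=
  fun x => if x ∈ A then 1 else 0

/-- Transition kernel of the ε-noise: probability that `N_ε(x) = y`. -/
noncomputable def noiseKernel (ε : ℝ) (x y : ι → Bool) : ℝ :=
  ∏ j : ι, if y j = x j then 1 - ε else ε

/-- `P(N_ε(x) ∈ A | x)`. -/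
noncomputable def condProb (ε : ℝ) (A : Finset (ι → Bool)) (x : ι → Bool) : ℝ :=
  ∑ y ∈ A, noiseKernel ε x y

/-- Sensitivity gauge φ(A, ε) = inf{δ > 0 : P{x : |P(N_ε(x) ∈ A | x) − P(A)| > δ} < δ}. -/
noncomputable def gauge (ε : ℝ) (A : Finset (ι → Bool)) : ℝ :=
  sInf {δ : ℝ | 0 < δ ∧
    cprob (@Finset.filter _ (fun x => δ < |condProb ε A x - cprob A|)
      (Classical.decPred _) Finset.univ) < δ}

/-- Flip the `k`-th bit. -/
def flipBit (k : ι) (x : ι → Bool) : ι → Bool := Function.update x k (!x k)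

/-- Influence of the `k`-th variable: `I_k(f) = E|f(σ_k x) − f(x)|`. -/
noncomputable def influence (k : ι) (f : (ι → Bool) → ℝ) : ℝ :=
  cexpect fun x => |f (flipBit k x) - f x|

/-- `I(f) = Σ_k I_k(f)`. -/
noncomputable def totalInf (f : (ι → Bool) → ℝ) : ℝ := ∑ k : ι, influence k f

/-- `II(f) = Σ_k I_k(f)²`. -/
noncomputable def sqInf (f : (ι → Bool) → ℝ) : ℝ := ∑ k : ι, (influence k f) ^ 2

/-- `II(A)` for an event `A`. -/
noncomputable def sqInfE (A : Finset (ι → Bool)) : ℝ := sqInf (indE A)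

/-- A monotone (upward closed) event. -/
def MonotoneEvent (A : Finset (ι → Bool)) : Prop :=
  ∀ x y : ι → Bool, (∀ j, x j ≤ y j) → x ∈ A → y ∈ A

/-- Fourier–Walsh coefficient `f̂(S) = E[f · u_S]`, where `u_S(x) = (−1)^{|S ∩ x|}`. -/
noncomputable def walshFourier (f : (ι → Bool) → ℝ) (S : Finset ι) : ℝ :=
  cexpect fun x => f x * (-1 : ℝ) ^ (S.filter fun j => x j = true).card

/-- `Q_ε f (x) = E[f(N_ε(x))]`. -/
noncomputable def Qop (ε : ℝ) (f : (ι → Bool) → ℝ) (x : ι → Bool) : ℝ :=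
  ∑ y : ι → Bool, noiseKernel ε x y * f y

/-- `VAR(f, ε)`: variance of `x ↦ E[f(N_ε(x)) | x]`. -/
noncomputable def VAR (ε : ℝ) (f : (ι → Bool) → ℝ) : ℝ :=
  cexpect fun x => (Qop ε f x - cexpect (Qop ε f)) ^ 2

/-- `P[A △ N_ε A]`. -/
noncomputable def probSymmDiff (ε : ℝ) (A : Finset (ι → Bool)) : ℝ :=
  cexpect fun x => ∑ y : ι → Bool, noiseKernel ε x y *
    (if (x ∈ A) ↔ (y ∈ A) then 0 else 1)

/-- `P[A \ N_ε A]`. -/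
noncomputable def probOffDiff (ε : ℝ) (A : Finset (ι → Bool)) : ℝ :=
  cexpect fun x => ∑ y : ι → Bool, noiseKernel ε x y *
    (if x ∈ A ∧ y ∉ A then 1 else 0)

/-- Majority function on the set `K`: `M_K(x) = sign(Σ_{j∈K}(2x_j − 1))`. -/
noncomputable def majority (K : Finset ι) (x : ι → Bool) : ℝ :=
  Real.sign (∑ j ∈ K, (2 * (if x j then (1:ℝ) else 0) - 1))

/-- Weighted majority function `M_w(x) = sign(Σ_j (2x_j − 1) w_j)`. -/
noncomputable def wMajority (w : ι → ℝ) (x : ι → Bool) : ℝ :=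
  Real.sign (∑ j : ι, (2 * (if x j then (1:ℝ) else 0) - 1) * w j)

/-- The discrete cube Ω_n = {0,1}^n. -/
abbrev Cube (n : ℕ) := Fin n → Bool

set_option linter.unusedSectionVars false

lemma sum_pi_bool (g : ι → Bool → ℝ) :
    ∑ x : ι → Bool, ∏ j : ι, g j (x j) = ∏ j : ι, (g j false + g j true) := by
  have h := Finset.prod_univ_sum (fun _ : ι => (Finset.univ : Finset Bool)) (fun i b => g i b)
  rw [Fintype.piFinset_univ] at h
  rw [← h]
  exact Finset.prod_congr rfl fun j _ => by simp [Fintype.sum_bool, add_comm]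

noncomputable def chi (S : Finset ι) (x : ι → Bool) : ℝ :=
  ∏ j : ι, (if j ∈ S then (if x j then (-1:ℝ) else 1) else 1)

lemma chi_eq_prod (S : Finset ι) (x : ι → Bool) :
    chi S x = ∏ j ∈ S, (if x j then (-1:ℝ) else 1) := by
  rw [chi, Finset.prod_ite_mem, Finset.univ_inter]

lemma chi_eq (S : Finset ι) (x : ι → Bool) :
    (-1 : ℝ) ^ (S.filter fun j => x j = true).card = chi S x := by
  rw [chi_eq_prod, Finset.prod_ite, Finset.prod_const, Finset.prod_const, one_pow, mul_one]

lemma sum_chi_mul_chi (S T : Finset ι) :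
    ∑ x : ι → Bool, chi S x * chi T x
      = if S = T then (2:ℝ) ^ Fintype.card ι else 0 := by
  have h : ∀ x : ι → Bool, chi S x * chi T x
      = ∏ j : ι, ((if j ∈ S then (if x j then (-1:ℝ) else 1) else 1)
          * (if j ∈ T then (if x j then (-1:ℝ) else 1) else 1)) := by
    intro x; rw [chi, chi, ← Finset.prod_mul_distrib]
  rw [Finset.sum_congr rfl fun x _ => h x,
    sum_pi_bool (fun j b => (if j ∈ S then (if b then (-1:ℝ) else 1) else 1)
          * (if j ∈ T then (if b then (-1:ℝ) else 1) else 1))]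
  have hf : ∀ j : ι,
      ((if j ∈ S then (if false then (-1:ℝ) else 1) else 1)
          * (if j ∈ T then (if false then (-1:ℝ) else 1) else 1)
        + (if j ∈ S then (if true then (-1:ℝ) else 1) else 1)
          * (if j ∈ T then (if true then (-1:ℝ) else 1) else 1))
      = if (j ∈ S ↔ j ∈ T) then (2:ℝ) else 0 := by
    intro j
    by_cases hS : j ∈ S <;> by_cases hT : j ∈ T <;> simp [hS, hT] <;> norm_num
  rw [Finset.prod_congr rfl fun j _ => hf j]
  by_cases hST : S = T
  · subst hST
    simp [Finset.prod_const]
  · rw [if_neg hST]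
    obtain ⟨j, hj⟩ : ∃ j, ¬(j ∈ S ↔ j ∈ T) := by
      by_contra hc
      push_neg at hc
      exact hST (Finset.ext fun j => (hc j))
    exact Finset.prod_eq_zero (Finset.mem_univ j) (by simp [hj])

lemma sum_S_chi (x y : ι → Bool) :
    ∑ S : Finset ι, chi S x * chi S y
      = if x = y then (2:ℝ) ^ Fintype.card ι else 0 := by
  have h : ∀ S : Finset ι, chi S x * chi S y
      = (∏ j ∈ S, ((if x j then (-1:ℝ) else 1) * (if y j then (-1:ℝ) else 1)))
        * ∏ j ∈ (Finset.univ : Finset ι) \ S, (1:ℝ) := by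
    intro S
    rw [chi_eq_prod, chi_eq_prod, ← Finset.prod_mul_distrib, Finset.prod_const_one, mul_one]
  rw [Finset.sum_congr rfl fun S _ => h S]
  rw [← Finset.powerset_univ, ← Finset.prod_add]
  have hc : ∀ j : ι,
      ((if x j then (-1:ℝ) else 1) * (if y j then (-1:ℝ) else 1) + 1)
      = if x j = y j then (2:ℝ) else 0 := by
    intro j; cases hx : x j <;> cases hy : y j <;> simp [hx, hy] <;> norm_num
  rw [Finset.prod_congr rfl fun j _ => hc j]
  by_cases hxy : x = y
  · subst hxy; simp [Finset.prod_const]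
  · rw [if_neg hxy]
    obtain ⟨j, hj⟩ : ∃ j, ¬(x j = y j) := by
      by_contra hc'
      push_neg at hc'
      exact hxy (funext hc')
    exact Finset.prod_eq_zero (Finset.mem_univ j) (by simp [hj])


lemma two_pow_pos : (0:ℝ) < 2 ^ Fintype.card ι := by positivity

lemma walshFourier_eq (f : (ι → Bool) → ℝ) (S : Finset ι) :
    walshFourier f S = (∑ y : ι → Bool, f y * chi S y) / 2 ^ Fintype.card ι := by
  rw [walshFourier, cexpect]
  congr 1
  exact Finset.sum_congr rfl fun y _ => by rw [chi_eq]

lemma inversion (f : (ι → Bool) → ℝ) (x : ι → Bool) :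
    f x = ∑ S : Finset ι, walshFourier f S * chi S x := by
  simp only [walshFourier_eq, div_mul_eq_mul_div, ← Finset.sum_div]
  rw [eq_div_iff (ne_of_gt (two_pow_pos (ι := ι)))]
  have h : ∑ S : Finset ι, (∑ y : ι → Bool, f y * chi S y) * chi S x
      = ∑ y : ι → Bool, f y * ∑ S : Finset ι, chi S y * chi S x := by
    simp_rw [Finset.sum_mul, Finset.mul_sum]
    rw [Finset.sum_comm]
    exact Finset.sum_congr rfl fun y _ => Finset.sum_congr rfl fun S _ => by ring
  rw [h]
  simp only [sum_S_chi, mul_ite, mul_zero]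
  rw [Finset.sum_ite_eq' Finset.univ x (fun y => f y * 2 ^ Fintype.card ι)]
  simp

lemma sum_sq_expansion (a : Finset ι → ℝ) :
    ∑ x : ι → Bool, (∑ S : Finset ι, a S * chi S x) ^ 2
      = 2 ^ Fintype.card ι * ∑ S : Finset ι, (a S) ^ 2 := by
  have h : ∑ x : ι → Bool, (∑ S : Finset ι, a S * chi S x) ^ 2
      = ∑ S : Finset ι, ∑ T : Finset ι, (a S * a T) * ∑ x : ι → Bool, chi S x * chi T x := by
    simp_rw [sq, Finset.sum_mul_sum, Finset.mul_sum]
    rw [Finset.sum_comm]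
    refine Finset.sum_congr rfl fun S _ => ?_
    rw [Finset.sum_comm]
    exact Finset.sum_congr rfl fun T _ => Finset.sum_congr rfl fun x _ => by ring
  rw [h]
  simp only [sum_chi_mul_chi, mul_ite, mul_zero]
  rw [Finset.mul_sum]
  refine Finset.sum_congr rfl fun S _ => ?_
  rw [Finset.sum_ite_eq Finset.univ S (fun T => a S * a T * 2 ^ Fintype.card ι)]
  simp [sq]
  ring

lemma qop_chi (ε : ℝ) (S : Finset ι) (x : ι → Bool) :
    ∑ y : ι → Bool, noiseKernel ε x y * chi S y
      = (1 - 2*ε) ^ S.card * chi S x := by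
  have h : ∀ y : ι → Bool, noiseKernel ε x y * chi S y
      = ∏ j : ι, ((if y j = x j then 1 - ε else ε)
          * (if j ∈ S then (if y j then (-1:ℝ) else 1) else 1)) := by
    intro y; rw [noiseKernel, chi, ← Finset.prod_mul_distrib]
  rw [Finset.sum_congr rfl fun y _ => h y,
    sum_pi_bool (fun j b => (if b = x j then 1 - ε else ε)
          * (if j ∈ S then (if b then (-1:ℝ) else 1) else 1))]
  have hf : ∀ j : ι,
      ((if false = x j then 1 - ε else ε) * (if j ∈ S then (if false then (-1:ℝ) else 1) else 1)
        + (if true = x j then 1 - ε else ε) * (if j ∈ S then (if true then (-1:ℝ) else 1) else 1))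
      = if j ∈ S then (1 - 2*ε) * (if x j then (-1:ℝ) else 1) else 1 := by
    intro j
    by_cases hj : j ∈ S <;> cases hx : x j <;> simp [hj, hx] <;> ring
  rw [Finset.prod_congr rfl fun j _ => hf j, Finset.prod_ite_mem, Finset.univ_inter,
    Finset.prod_mul_distrib, Finset.prod_const, chi_eq_prod]

lemma qop_eq (ε : ℝ) (f : (ι → Bool) → ℝ) (x : ι → Bool) :
    Qop ε f x = ∑ S : Finset ι, ((1 - 2*ε) ^ S.card * walshFourier f S) * chi S x := by
  rw [Qop]
  calc ∑ y : ι → Bool, noiseKernel ε x y * f y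
      = ∑ y : ι → Bool, ∑ S : Finset ι, walshFourier f S * (noiseKernel ε x y * chi S y) := by
        refine Finset.sum_congr rfl fun y _ => ?_
        rw [inversion f y, Finset.mul_sum]
        exact Finset.sum_congr rfl fun S _ => by ring
    _ = ∑ S : Finset ι, walshFourier f S * ∑ y : ι → Bool, noiseKernel ε x y * chi S y := by
        rw [Finset.sum_comm]
        exact Finset.sum_congr rfl fun S _ => by rw [Finset.mul_sum]
    _ = ∑ S : Finset ι, ((1 - 2*ε) ^ S.card * walshFourier f S) * chi S x := by
        refine Finset.sum_congr rfl fun S _ => ?_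
        rw [qop_chi]
        ring


lemma sum_chi (S : Finset ι) :
    ∑ x : ι → Bool, chi S x = if S = ∅ then (2:ℝ) ^ Fintype.card ι else 0 := by
  have h := sum_chi_mul_chi S (∅ : Finset ι)
  have h0 : ∀ x : ι → Bool, chi (∅ : Finset ι) x = 1 := by
    intro x; rw [chi_eq_prod]; simp
  simp only [h0, mul_one] at h
  exact h

lemma cexpect_qop (ε : ℝ) (f : (ι → Bool) → ℝ) :
    cexpect (Qop ε f) = walshFourier f ∅ := by
  rw [cexpect]
  rw [Finset.sum_congr rfl fun x (_ : x ∈ Finset.univ) => qop_eq ε f x]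
  rw [Finset.sum_comm]
  have : ∀ S : Finset ι, ∑ x : ι → Bool, ((1 - 2*ε) ^ S.card * walshFourier f S) * chi S x
      = if S = ∅ then walshFourier f ∅ * 2 ^ Fintype.card ι else 0 := by
    intro S
    rw [← Finset.mul_sum, sum_chi]
    by_cases hS : S = ∅
    · subst hS; simp
    · simp [hS]
  rw [Finset.sum_congr rfl fun S _ => this S]
  rw [Finset.sum_ite_eq' Finset.univ (∅ : Finset ι) (fun _ => walshFourier f ∅ * 2 ^ Fintype.card ι)]
  simp

lemma var_eq (ε : ℝ) (f : (ι → Bool) → ℝ) :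
    VAR ε f = ∑ S ∈ Finset.univ.filter (fun S : Finset ι => S ≠ ∅),
      ((1 - 2*ε) ^ S.card * walshFourier f S) ^ 2 := by
  have hb : ∀ x : ι → Bool, Qop ε f x - cexpect (Qop ε f)
      = ∑ S : Finset ι, (if S = ∅ then 0 else (1 - 2*ε) ^ S.card * walshFourier f S) * chi S x := by
    intro x
    rw [qop_eq, cexpect_qop]
    have : ∀ S : Finset ι,
        (if S = ∅ then (0:ℝ) else (1 - 2*ε) ^ S.card * walshFourier f S) * chi S x
        = ((1 - 2*ε) ^ S.card * walshFourier f S) * chi S x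
          - (if S = ∅ then walshFourier f ∅ else 0) := by
      intro S
      by_cases hS : S = ∅
      · subst hS
        simp [chi_eq_prod]
      · simp [hS]
    rw [Finset.sum_congr rfl fun S _ => this S, Finset.sum_sub_distrib]
    rw [Finset.sum_ite_eq' Finset.univ (∅ : Finset ι) (fun _ => walshFourier f ∅)]
    simp
  rw [VAR, cexpect]
  rw [Finset.sum_congr rfl fun x (_ : x ∈ Finset.univ) => by rw [hb x]]
  rw [sum_sq_expansion (fun S => if S = ∅ then 0 else (1 - 2*ε) ^ S.card * walshFourier f S)]
  rw [mul_comm, mul_div_assoc, div_self (ne_of_gt (two_pow_pos (ι := ι))), mul_one]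
  rw [Finset.sum_filter]
  refine Finset.sum_congr rfl fun S _ => ?_
  by_cases hS : S = ∅ <;> simp [hS]

lemma parseval (f : (ι → Bool) → ℝ) :
    ∑ S : Finset ι, (walshFourier f S) ^ 2 = cexpect (fun x => f x ^ 2) := by
  rw [cexpect]
  have h : ∀ x : ι → Bool, f x ^ 2 = (∑ S : Finset ι, walshFourier f S * chi S x) ^ 2 :=
    fun x => by rw [← inversion]
  rw [Finset.sum_congr rfl fun x (_ : x ∈ (Finset.univ : Finset (ι → Bool))) => h x]
  rw [sum_sq_expansion (walshFourier f)]
  rw [mul_comm, mul_div_assoc, div_self (ne_of_gt (two_pow_pos (ι := ι))), mul_one]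


lemma cprob_nonneg (A : Finset (ι → Bool)) : 0 ≤ cprob A := by
  rw [cprob]; positivity

lemma cprob_le_one (A : Finset (ι → Bool)) : cprob A ≤ 1 := by
  rw [cprob, div_le_one (two_pow_pos (ι := ι))]
  have h := Finset.card_le_univ A
  calc (A.card : ℝ) ≤ (Fintype.card (ι → Bool) : ℝ) := by exact_mod_cast h
  _ = 2 ^ Fintype.card ι := by rw [Fintype.card_fun]; norm_num

lemma cexpect_indE (A : Finset (ι → Bool)) : cexpect (indE A) = cprob A := by
  rw [cexpect, cprob]
  congr 1
  simp only [indE]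
  rw [Finset.sum_boole]
  congr 1
  rw [Finset.filter_mem_eq_inter, Finset.univ_inter]

lemma condProb_eq (ε : ℝ) (A : Finset (ι → Bool)) (x : ι → Bool) :
    condProb ε A x = Qop ε (indE A) x := by
  rw [condProb, Qop]
  simp only [indE, mul_ite, mul_one, mul_zero]
  rw [Finset.sum_ite_mem, Finset.univ_inter]

lemma cprob_eq_cexpect_qop (ε : ℝ) (A : Finset (ι → Bool)) :
    cprob A = cexpect (Qop ε (indE A)) := by
  rw [← cexpect_indE A, cexpect, cexpect_qop, walshFourier_eq]
  have h : ∀ y : ι → Bool, indE A y * chi (∅ : Finset ι) y = indE A y := by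
    intro y; rw [chi_eq_prod]; simp
  rw [Finset.sum_congr rfl fun y (_ : y ∈ (Finset.univ : Finset (ι → Bool))) => h y]

lemma noiseKernel_nonneg {ε : ℝ} (hε0 : 0 ≤ ε) (hε1 : ε ≤ 1) (x y : ι → Bool) :
    0 ≤ noiseKernel ε x y := by
  rw [noiseKernel]
  refine Finset.prod_nonneg fun j _ => ?_
  split <;> linarith

lemma noiseKernel_sum_one {ε : ℝ} (x : ι → Bool) :
    ∑ y : ι → Bool, noiseKernel ε x y = 1 := by
  have h : ∀ y : ι → Bool, noiseKernel ε x y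
      = ∏ j : ι, (if y j = x j then 1 - ε else ε) := fun y => rfl
  rw [Finset.sum_congr rfl fun y (_ : y ∈ (Finset.univ : Finset (ι → Bool))) => h y,
    sum_pi_bool (fun j b => if b = x j then 1 - ε else ε)]
  have h2 : ∀ j : ι, ((if false = x j then 1 - ε else ε) + (if true = x j then 1 - ε else ε)) = 1 := by
    intro j; cases hx : x j <;> simp [hx]
  rw [Finset.prod_congr rfl fun j _ => h2 j, Finset.prod_const_one]

lemma qop_mem_Icc {ε : ℝ} (hε0 : 0 ≤ ε) (hε1 : ε ≤ 1) (A : Finset (ι → Bool)) (x : ι → Bool) :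
    0 ≤ Qop ε (indE A) x ∧ Qop ε (indE A) x ≤ 1 := by
  constructor
  · refine Finset.sum_nonneg fun y _ => mul_nonneg (noiseKernel_nonneg hε0 hε1 x y) ?_
    simp only [indE]; split <;> norm_num
  · have hb : Qop ε (indE A) x ≤ ∑ y : ι → Bool, noiseKernel ε x y := by
      refine Finset.sum_le_sum fun y _ => ?_
      have h1 := noiseKernel_nonneg hε0 hε1 x y
      have h2 : indE A y ≤ 1 := by simp only [indE]; split <;> norm_num
      nlinarith
    rw [noiseKernel_sum_one x] at hb
    exact hb

lemma cheb {B : Finset (ι → Bool)} {δ : ℝ} (hδ : 0 < δ) {h : (ι → Bool) → ℝ} {c : ℝ}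
    (hB : ∀ x ∈ B, δ < |h x - c|) :
    δ ^ 2 * cprob B ≤ cexpect (fun x => (h x - c) ^ 2) := by
  rw [cprob, cexpect, ← mul_div_assoc]
  apply (div_le_div_iff_of_pos_right (two_pow_pos (ι := ι))).mpr
  calc δ ^ 2 * (B.card : ℝ) = ∑ _x ∈ B, δ ^ 2 := by
        rw [Finset.sum_const, nsmul_eq_mul]; ring
  _ ≤ ∑ x ∈ B, (h x - c) ^ 2 := by
        refine Finset.sum_le_sum fun x hx => ?_
        have h1 := hB x hx
        have h2 : |h x - c| ^ 2 = (h x - c) ^ 2 := sq_abs _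
        nlinarith [abs_nonneg (h x - c)]
  _ ≤ ∑ x : ι → Bool, (h x - c) ^ 2 :=
        Finset.sum_le_sum_of_subset_of_nonneg (Finset.subset_univ B)
          (fun _ _ _ => sq_nonneg _)

lemma var_upper {B : Finset (ι → Bool)} {δ : ℝ} (hδ : 0 ≤ δ) {h : (ι → Bool) → ℝ} {c : ℝ}
    (hout : ∀ x, x ∉ B → |h x - c| ≤ δ) (hbd : ∀ x, (h x - c) ^ 2 ≤ 1) :
    cexpect (fun x => (h x - c) ^ 2) ≤ δ ^ 2 + cprob B := by
  rw [cexpect, cprob, div_le_iff₀ (two_pow_pos (ι := ι))]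
  have step1 : ∑ x : ι → Bool, (h x - c) ^ 2
      ≤ ∑ x : ι → Bool, (δ ^ 2 + if x ∈ B then 1 else 0) := by
    refine Finset.sum_le_sum fun x _ => ?_
    by_cases hx : x ∈ B
    · have := hbd x
      rw [if_pos hx]
      nlinarith [sq_nonneg δ]
    · have h1 := hout x hx
      have h2 : |h x - c| ^ 2 = (h x - c) ^ 2 := sq_abs _
      rw [if_neg hx, add_zero]
      nlinarith [abs_nonneg (h x - c)]
  have step2 : ∑ x : ι → Bool, (δ ^ 2 + if x ∈ B then (1:ℝ) else 0)
      = δ ^ 2 * 2 ^ Fintype.card ι + B.card := by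
    rw [Finset.sum_add_distrib, Finset.sum_const, Finset.sum_boole,
      Finset.filter_mem_eq_inter, Finset.univ_inter, Finset.card_univ,
      Fintype.card_fun, Fintype.card_bool, nsmul_eq_mul]
    push_cast
    ring
  have step3 : (δ ^ 2 + (B.card : ℝ) / 2 ^ Fintype.card ι) * 2 ^ Fintype.card ι
      = δ ^ 2 * 2 ^ Fintype.card ι + B.card := by
    field_simp
  linarith

lemma gauge_nonneg (ε : ℝ) (A : Finset (ι → Bool)) : 0 ≤ gauge ε A :=
  Real.sInf_nonneg fun _ hδ => le_of_lt hδ.1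

lemma gauge_set_nonempty (ε : ℝ) (A : Finset (ι → Bool)) :
    {δ : ℝ | 0 < δ ∧
      cprob (@Finset.filter _ (fun x => δ < |condProb ε A x - cprob A|)
        (Classical.decPred _) Finset.univ) < δ}.Nonempty := by
  refine ⟨2, by norm_num, lt_of_le_of_lt (cprob_le_one _) (by norm_num)⟩

lemma gauge_le {ε δ : ℝ} {A : Finset (ι → Bool)} (hδ : 0 < δ)
    (h : cprob (@Finset.filter _ (fun x => δ < |condProb ε A x - cprob A|)
        (Classical.decPred _) Finset.univ) < δ) :
    gauge ε A ≤ δ :=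
  csInf_le ⟨0, fun _ hy => le_of_lt hy.1⟩ ⟨hδ, h⟩

lemma gauge_lt_exists {ε η : ℝ} {A : Finset (ι → Bool)} (hg : gauge ε A < η) :
    ∃ δ : ℝ, 0 < δ ∧ δ < η ∧
      cprob (@Finset.filter _ (fun x => δ < |condProb ε A x - cprob A|)
        (Classical.decPred _) Finset.univ) < δ := by
  obtain ⟨δ, hδmem, hδlt⟩ := exists_lt_of_csInf_lt (gauge_set_nonempty ε A) hg
  exact ⟨δ, hδmem.1, hδlt, hδmem.2⟩

lemma var_nonneg (ε : ℝ) (f : (ι → Bool) → ℝ) : 0 ≤ VAR ε f := by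
  rw [VAR, cexpect]
  positivity

lemma weight_le_var {ε : ℝ} (hε0 : 0 < ε) (hε2 : ε < 1/2)
    (A : Finset (ι → Bool)) (k : ℕ) :
    ∑ S ∈ Finset.univ.filter (fun S : Finset ι => 1 ≤ S.card ∧ S.card ≤ k),
        (walshFourier (indE A) S) ^ 2
      ≤ (1 / (1 - 2*ε) ^ (2*k)) * VAR ε (indE A) := by
  have hρ0 : 0 < 1 - 2*ε := by linarith
  have hρ1 : 1 - 2*ε ≤ 1 := by linarith
  rw [var_eq, Finset.mul_sum]
  have hsub : Finset.univ.filter (fun S : Finset ι => 1 ≤ S.card ∧ S.card ≤ k)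
      ⊆ Finset.univ.filter (fun S : Finset ι => S ≠ ∅) := by
    intro S hS
    rw [Finset.mem_filter] at hS ⊢
    refine ⟨hS.1, fun h0 => ?_⟩
    rw [h0] at hS
    simp at hS
  refine le_trans (Finset.sum_le_sum fun S hS => ?_)
    (Finset.sum_le_sum_of_subset_of_nonneg hsub fun S _ _ => by positivity)
  rw [Finset.mem_filter] at hS
  have hcard := hS.2.2
  have h1 : (1 - 2*ε) ^ (2*k) ≤ ((1 - 2*ε) ^ S.card) ^ 2 := by
    rw [← pow_mul]
    exact pow_le_pow_of_le_one (le_of_lt hρ0) hρ1 (by omega)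
  have h2 : (0:ℝ) < (1 - 2*ε) ^ (2*k) := pow_pos hρ0 _
  rw [mul_pow, div_mul_eq_mul_div, one_mul, le_div_iff₀ h2]
  nlinarith [sq_nonneg (walshFourier (indE A) S)]

lemma fourier_weight_le_one (A : Finset (ι → Bool)) :
    ∑ S : Finset ι, (walshFourier (indE A) S) ^ 2 ≤ 1 := by
  rw [parseval]
  have h1 : (fun x : ι → Bool => indE A x ^ 2) = indE A := by
    funext x
    simp only [indE]
    split <;> norm_num
  rw [h1, cexpect_indE]
  exact cprob_le_one A

lemma var_le_weight {ε : ℝ} (hε0 : 0 < ε) (hε2 : ε < 1/2)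
    (A : Finset (ι → Bool)) (k : ℕ) :
    VAR ε (indE A)
      ≤ (∑ S ∈ Finset.univ.filter (fun S : Finset ι => 1 ≤ S.card ∧ S.card ≤ k),
          (walshFourier (indE A) S) ^ 2) + (1 - 2*ε) ^ (2*k) := by
  have hρ0 : 0 < 1 - 2*ε := by linarith
  have hρ1 : 1 - 2*ε ≤ 1 := by linarith
  rw [var_eq]
  rw [← Finset.sum_filter_add_sum_filter_not
    (Finset.univ.filter fun S : Finset ι => S ≠ ∅) (fun S => S.card ≤ k)]
  have part1 : ∑ S ∈ (Finset.univ.filter fun S : Finset ι => S ≠ ∅).filter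
        (fun S => S.card ≤ k), ((1 - 2*ε) ^ S.card * walshFourier (indE A) S) ^ 2
      ≤ ∑ S ∈ Finset.univ.filter (fun S : Finset ι => 1 ≤ S.card ∧ S.card ≤ k),
          (walshFourier (indE A) S) ^ 2 := by
    rw [Finset.filter_filter]
    have heq : Finset.univ.filter (fun S : Finset ι => S ≠ ∅ ∧ S.card ≤ k)
        = Finset.univ.filter (fun S : Finset ι => 1 ≤ S.card ∧ S.card ≤ k) := by
      refine Finset.filter_congr fun S _ => ?_
      simp [Finset.one_le_card, Finset.nonempty_iff_ne_empty]
    rw [heq]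
    refine Finset.sum_le_sum fun S hS => ?_
    have h1 : ((1 - 2*ε) ^ S.card) ^ 2 ≤ 1 := by
      rw [← pow_mul]
      exact pow_le_one₀ (le_of_lt hρ0) hρ1
    rw [mul_pow]
    nlinarith [sq_nonneg (walshFourier (indE A) S)]
  have part2 : ∑ S ∈ (Finset.univ.filter fun S : Finset ι => S ≠ ∅).filter
        (fun S => ¬ S.card ≤ k), ((1 - 2*ε) ^ S.card * walshFourier (indE A) S) ^ 2
      ≤ (1 - 2*ε) ^ (2*k) := by
    have hstep1 : ∑ S ∈ (Finset.univ.filter fun S : Finset ι => S ≠ ∅).filter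
          (fun S => ¬ S.card ≤ k), ((1 - 2*ε) ^ S.card * walshFourier (indE A) S) ^ 2
        ≤ ∑ S ∈ (Finset.univ.filter fun S : Finset ι => S ≠ ∅).filter
          (fun S => ¬ S.card ≤ k), (1 - 2*ε) ^ (2*k) * (walshFourier (indE A) S) ^ 2 := by
      refine Finset.sum_le_sum fun S hS => ?_
      rw [Finset.mem_filter] at hS
      have hk : k < S.card := not_le.mp hS.2
      have h1 : ((1 - 2*ε) ^ S.card) ^ 2 ≤ (1 - 2*ε) ^ (2*k) := by
        rw [← pow_mul]
        exact pow_le_pow_of_le_one (le_of_lt hρ0) hρ1 (by omega)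
      rw [mul_pow]
      nlinarith [sq_nonneg (walshFourier (indE A) S)]
    have hstep2 : ∑ S ∈ (Finset.univ.filter fun S : Finset ι => S ≠ ∅).filter
          (fun S => ¬ S.card ≤ k), (1 - 2*ε) ^ (2*k) * (walshFourier (indE A) S) ^ 2
        ≤ ∑ S : Finset ι, (1 - 2*ε) ^ (2*k) * (walshFourier (indE A) S) ^ 2 :=
      Finset.sum_le_sum_of_subset_of_nonneg (Finset.subset_univ _)
        (fun S _ _ => by positivity)
    have hstep3 : ∑ S : Finset ι, (1 - 2*ε) ^ (2*k) * (walshFourier (indE A) S) ^ 2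
        = (1 - 2*ε) ^ (2*k) * ∑ S : Finset ι, (walshFourier (indE A) S) ^ 2 :=
      (Finset.mul_sum _ _ _).symm
    have hstep4 := fourier_weight_le_one A
    have hρk : (0:ℝ) ≤ (1 - 2*ε) ^ (2*k) := by positivity
    nlinarith
  linarith

lemma var_eq_condProb (ε : ℝ) (A : Finset (ι → Bool)) :
    VAR ε (indE A) = cexpect fun x => (condProb ε A x - cprob A) ^ 2 := by
  rw [VAR]
  refine congrArg cexpect (funext fun x => ?_)
  rw [condProb_eq, cprob_eq_cexpect_qop ε A]

lemma var_lt_of_gauge {ε η : ℝ} (hε0 : 0 ≤ ε) (hε1 : ε ≤ 1) {A : Finset (ι → Bool)}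
    (hη : 0 < η) (hg : gauge ε A < η) :
    VAR ε (indE A) < η ^ 2 + η := by
  obtain ⟨δ, hδ0, hδη, hδ⟩ := gauge_lt_exists hg
  rw [var_eq_condProb]
  have hub : cexpect (fun x => (condProb ε A x - cprob A) ^ 2) ≤ δ ^ 2
      + cprob (@Finset.filter _ (fun x => δ < |condProb ε A x - cprob A|)
        (Classical.decPred _) Finset.univ) := by
    refine var_upper hδ0.le (fun x hx => ?_) (fun x => ?_)
    · by_contra hcon
      exact hx (Finset.mem_filter.mpr ⟨Finset.mem_univ x, not_le.mp hcon⟩)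
    · have h1 := qop_mem_Icc hε0 hε1 A x
      have h2 := cprob_nonneg A
      have h3 := cprob_le_one A
      rw [condProb_eq]
      nlinarith [h1.1, h1.2]
  have hp := cprob_nonneg (@Finset.filter _ (fun x => δ < |condProb ε A x - cprob A|)
        (Classical.decPred _) Finset.univ)
  nlinarith

lemma gauge_le_of_var {ε δ : ℝ} {A : Finset (ι → Bool)} (hδ : 0 < δ)
    (hvar : VAR ε (indE A) < δ ^ 3) :
    gauge ε A ≤ δ := by
  refine gauge_le hδ ?_
  have hB : ∀ x ∈ (@Finset.filter _ (fun x => δ < |condProb ε A x - cprob A|)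
      (Classical.decPred _) Finset.univ), δ < |condProb ε A x - cprob A| :=
    fun x hx => (Finset.mem_filter.mp hx).2
  have hcheb := cheb hδ hB
  rw [← var_eq_condProb] at hcheb
  have h2 : (0:ℝ) < δ ^ 2 := by positivity
  nlinarith

/-- Noise sensitivity is equivalent to the vanishing of the low-frequency Fourier weight. -/
theorem noise_sensitive_iff_low_fourier
    (n : ℕ → ℕ) (A : ∀ m, Finset (Cube (n m))) :
    (∀ ε : ℝ, 0 < ε → ε < 1/2 →
        Tendsto (fun m => gauge ε (A m)) atTop (nhds 0)) ↔
    (∀ k : ℕ, Tendsto (fun m =>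
        ∑ S ∈ Finset.univ.filter
            (fun S : Finset (Fin (n m)) => 1 ≤ S.card ∧ S.card ≤ k),
          (walshFourier (indE (A m)) S) ^ 2) atTop (nhds 0)) := by
  constructor
  · intro hns k
    have hg := hns (1/4) (by norm_num) (by norm_num)
    have hvar : Tendsto (fun m => VAR (1/4 : ℝ) (indE (A m))) atTop (nhds 0) := by
      rw [Metric.tendsto_atTop] at hg ⊢
      intro η hη
      have hη'0 : (0:ℝ) < min (η/2) (1/2) := lt_min (by linarith) (by norm_num)
      obtain ⟨N, hN⟩ := hg _ hη'0
      refine ⟨N, fun m hm => ?_⟩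
      have h1 := hN m hm
      rw [Real.dist_eq, sub_zero] at h1 ⊢
      have h2 : gauge (1/4 : ℝ) (A m) < min (η/2) (1/2) := lt_of_abs_lt h1
      have h3 := var_lt_of_gauge (by norm_num) (by norm_num) hη'0 h2
      have h4 : 0 ≤ VAR (1/4 : ℝ) (indE (A m)) := var_nonneg _ _
      rw [abs_of_nonneg h4]
      have h5 : min (η/2) (1/2 : ℝ) ≤ 1/2 := min_le_right _ _
      have h6 : min (η/2) (1/2 : ℝ) ≤ η/2 := min_le_left _ _
      nlinarith
    have hbound : ∀ m, (∑ S ∈ Finset.univ.filter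
          (fun S : Finset (Fin (n m)) => 1 ≤ S.card ∧ S.card ≤ k),
          (walshFourier (indE (A m)) S) ^ 2)
        ≤ (1 / (1 - 2*(1/4 : ℝ)) ^ (2*k)) * VAR (1/4 : ℝ) (indE (A m)) :=
      fun m => weight_le_var (by norm_num) (by norm_num) (A m) k
    refine squeeze_zero (fun m => Finset.sum_nonneg fun S _ => sq_nonneg _) hbound ?_
    have := hvar.const_mul (1 / (1 - 2*(1/4 : ℝ)) ^ (2*k))
    simpa using this
  · intro hW ε hε0 hε2
    have hρ0 : 0 < 1 - 2*ε := by linarith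
    rw [Metric.tendsto_atTop]
    intro η hη
    have hδ0 : (0:ℝ) < min (η/2) (1/2) := lt_min (by linarith) (by norm_num)
    set δ := min (η/2) (1/2 : ℝ) with hδdef
    have hδη : δ < η := lt_of_le_of_lt (min_le_left _ _) (by linarith)
    obtain ⟨k, hk⟩ := exists_pow_lt_of_lt_one (show (0:ℝ) < δ^3/2 by positivity)
      (show (1 - 2*ε)^2 < 1 by nlinarith)
    have hk' : (1 - 2*ε) ^ (2*k) < δ^3/2 := by
      rw [pow_mul]
      exact hk
    have h1 := hW k
    rw [Metric.tendsto_atTop] at h1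
    obtain ⟨N, hN⟩ := h1 (δ^3/2) (by positivity)
    refine ⟨N, fun m hm => ?_⟩
    have h2 := hN m hm
    rw [Real.dist_eq, sub_zero] at h2
    have h3 := lt_of_abs_lt h2
    have h4 := var_le_weight hε0 hε2 (A m) k
    have h5 : VAR ε (indE (A m)) < δ^3 := by linarith
    have h6 := gauge_le_of_var hδ0 h5
    rw [Real.dist_eq, sub_zero, abs_of_nonneg (gauge_nonneg _ _)]
    exact lt_of_le_of_lt h6 hδη

end BKS
end

section
/- There is a universal constant C such that for every n and every monotone function f : Ω_n → [0,1] with E(f M) > 0, where M = M_{[n]} is the majority function on all n variables, one has I(f) ≤ C √n · E(f M) · (1 + √(−log E(f M))). -/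
/-!
For monotone `f` each influence is a degree-one Fourier coefficient, so `I(f) = 2 E[f S]` where
`S = Σ_j (2 x_j - 1)`. Pairing `x` with its complement `xᶜ` turns `E[f S]` and
`E[f M] = E[f sign S]` into `E[g S⁺]` and `E[g 1_{S > 0}]` with `g x = f x - f xᶜ`. Level `n - m`
of the cube lies below level `m > n / 2`, so by double counting `g` has nonnegative sum over every
such level; hence `E[g min(S⁺, T)] ≤ T E[f M]`. The rest, `E[g (S - T)⁺] ≤ E[(S - T)⁺]`, is a
Chernoff tail `≤ exp(n t² / 2 - t T) / t`. Taking `T = a √n`, `t = a / √n` and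
`a = 2 (1 + √(-log E[f M]))` gives the bound with `C = 5`.
-/

namespace BKS

open Finset Real

variable {ι : Type}

/-- Written as in `majority`, so that `majority univ x = sign (spinSum x)` holds by `rfl`. -/
noncomputable def spin (j : ι) (x : ι → Bool) : ℝ := 2 * (if x j then (1 : ℝ) else 0) - 1

lemma spin_compl (j : ι) (x : ι → Bool) : spin j xᶜ = -spin j x := by
  cases h : x j <;> simp [spin, h] <;> norm_num

section

variable [DecidableEq ι]

lemma spin_flipBit_self (k : ι) (x : ι → Bool) :
    spin k (flipBit k x) = -spin k x := by
  cases h : x k <;> simp [spin, flipBit, h] <;> norm_num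

lemma flipBit_involutive (k : ι) : Function.Involutive (flipBit k) := by
  intro x; simp [flipBit]

lemma abs_sub_flipBit_eq {f : (ι → Bool) → ℝ} (hf : Monotone f) (k : ι) (x : ι → Bool) :
    |f (flipBit k x) - f x| = (f x - f (flipBit k x)) * spin k x := by
  cases h : x k
  · have : f x ≤ f (flipBit k x) := hf (by simp [flipBit, h])
    rw [abs_of_nonneg (sub_nonneg.2 this)]; simp [spin, h]
  · have : f (flipBit k x) ≤ f x := hf (by simp [flipBit, h])
    rw [abs_of_nonpos (sub_nonpos.2 this)]; simp [spin, h]; ring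

def ofFinset (s : Finset ι) : ι → Bool := fun j => decide (j ∈ s)

lemma ofFinset_mono : Monotone (ofFinset : Finset ι → ι → Bool) := fun s t hst j => by
  by_cases hj : j ∈ s
  · simp [ofFinset, hj, hst hj]
  · simp [ofFinset, hj]

end

variable [Fintype ι]

noncomputable def spinSum (x : ι → Bool) : ℝ := ∑ j, spin j x

lemma majority_univ (x : ι → Bool) : majority univ x = Real.sign (spinSum x) := rfl

lemma spinSum_compl (x : ι → Bool) : spinSum xᶜ = -spinSum x := by
  simp [spinSum, spin_compl]

variable [DecidableEq ι]

theorem influence_eq_of_monotone {f : (ι → Bool) → ℝ} (hf : Monotone f) (k : ι) :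
    influence k f = 2 * cexpect fun x => f x * spin k x := by
  have hswap : ∑ x, f (flipBit k x) * spin k x = ∑ x, -(f x * spin k x) :=
    Fintype.sum_equiv (flipBit_involutive k).toPerm _ _ fun x => by simp [spin_flipBit_self]
  simp only [influence, cexpect, abs_sub_flipBit_eq hf, sub_mul, sum_sub_distrib, hswap,
    sum_neg_distrib]
  ring

theorem totalInf_eq_of_monotone {f : (ι → Bool) → ℝ} (hf : Monotone f) :
    totalInf f = 2 * cexpect fun x => f x * spinSum x := by
  simp only [totalInf, influence_eq_of_monotone hf, cexpect, ← mul_sum, ← sum_div]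
  rw [sum_comm]
  simp only [spinSum, mul_sum]

theorem sum_mul_odd_spinSum {h : ℝ → ℝ} (hh : Function.Odd h) (f : (ι → Bool) → ℝ) :
    ∑ x, f x * h (spinSum x) =
      ∑ x, (f x - f xᶜ) * if 0 < spinSum x then h (spinSum x) else 0 := by
  set g : (ι → Bool) → ℝ := fun x => if 0 < spinSum x then h (spinSum x) else 0
  have hg : ∀ x, h (spinSum x) = g x - g xᶜ := by
    intro x
    simp only [g, spinSum_compl, neg_pos]
    rcases lt_trichotomy (spinSum x) 0 with hs | hs | hs
    · rw [if_neg hs.not_gt, if_pos hs, hh, zero_sub, neg_neg]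
    · simp only [hs, lt_irrefl, if_false, sub_zero, hh.map_zero]
    · rw [if_pos hs, if_neg hs.not_gt, sub_zero]
  have hswap : ∑ x, f x * g xᶜ = ∑ x, f xᶜ * g x :=
    Fintype.sum_equiv (compl_involutive.toPerm _) _ _ fun x => by simp
  calc ∑ x, f x * h (spinSum x) = ∑ x, f x * (g x - g xᶜ) := sum_congr rfl fun x _ => by rw [hg]
    _ = ∑ x, (f x - f xᶜ) * g x := by simp only [mul_sub, sub_mul, sum_sub_distrib, hswap]

theorem choose_mul_sum_powersetCard_le {F : Finset ι → ℝ} (hF : Monotone F) {k m : ℕ}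
    (hkm : k ≤ m) :
    ((Fintype.card ι - k).choose (m - k) : ℝ) * ∑ s ∈ powersetCard k univ, F s ≤
      (m.choose k : ℝ) * ∑ t ∈ powersetCard m univ, F t := by
  calc _ = ∑ s ∈ powersetCard k univ, ∑ t ∈ (powersetCard m univ).filter (s ⊆ ·), F s := by
        rw [mul_sum]
        refine sum_congr rfl fun s hs => ?_
        rw [mem_powersetCard_univ] at hs
        rw [sum_const, card_filter_powersetCard_subset s univ m (subset_univ s) (hs ▸ hkm),
          card_univ, hs, nsmul_eq_mul]
    _ ≤ ∑ s ∈ powersetCard k univ, ∑ t ∈ (powersetCard m univ).filter (s ⊆ ·), F t :=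
        sum_le_sum fun s _ => sum_le_sum fun t ht => hF (mem_filter.1 ht).2
    _ = ∑ t ∈ powersetCard m univ, ∑ s ∈ powersetCard k t, F t :=
        sum_comm' fun s t => by simp only [mem_filter, mem_powersetCard]; tauto
    _ = _ := by
        rw [mul_sum]
        refine sum_congr rfl fun t ht => ?_
        rw [sum_const, card_powersetCard, mem_powersetCard_univ.1 ht, nsmul_eq_mul]

theorem sum_powersetCard_compl_le {F : Finset ι → ℝ} (hF : Monotone F) {m : ℕ}
    (hm : m ≤ Fintype.card ι) (hnm : Fintype.card ι ≤ 2 * m) :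
    ∑ s ∈ powersetCard m univ, F sᶜ ≤ ∑ s ∈ powersetCard m univ, F s := by
  have hcompl : ∑ s ∈ powersetCard m univ, F sᶜ =
      ∑ s ∈ powersetCard (Fintype.card ι - m) univ, F s := by
    refine sum_nbij' compl compl (fun s hs => ?_) (fun s hs => ?_)
      (fun s _ => compl_compl s) (fun s _ => compl_compl s) fun _ _ => rfl
    all_goals simp only [mem_powersetCard_univ, card_compl] at hs ⊢; omega
  have hle := choose_mul_sum_powersetCard_le hF (k := Fintype.card ι - m) (m := m) (by omega)
  rw [Nat.sub_sub_self hm,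
    Nat.choose_symm_of_eq_add (by omega : m = m - (Fintype.card ι - m) + (Fintype.card ι - m))]
    at hle
  rw [hcompl]
  exact le_of_mul_le_mul_left hle (by exact_mod_cast Nat.choose_pos (by omega))

theorem sum_sub_compl_mul_card_nonneg {F : Finset ι → ℝ} (hF : Monotone F) {φ : ℕ → ℝ}
    (hφ : ∀ m, 0 ≤ φ m) (hφ0 : ∀ m, 2 * m ≤ Fintype.card ι → φ m = 0) :
    0 ≤ ∑ s, (F s - F sᶜ) * φ #s := by
  rw [← sum_fiberwise_of_maps_to (g := card) (t := range (Fintype.card ι + 1))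
    fun s _ => mem_range.2 (Nat.lt_succ_of_le (card_le_univ s))]
  refine sum_nonneg fun m hm => ?_
  have hlevel : univ.filter (fun s : Finset ι => #s = m) = powersetCard m univ := by
    ext s; simp
  rw [hlevel, sum_congr rfl fun s hs => by rw [mem_powersetCard_univ.1 hs], ← sum_mul,
    sum_sub_distrib]
  rcases le_or_gt (2 * m) (Fintype.card ι) with h | h
  · rw [hφ0 m h, mul_zero]
  · exact mul_nonneg (sub_nonneg.2 (sum_powersetCard_compl_le hF
      (Nat.lt_succ_iff.1 (mem_range.1 hm)) h.le)) (hφ m)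

lemma ofFinset_bijective : Function.Bijective (ofFinset : Finset ι → ι → Bool) := by
  refine ⟨fun s t hst => ?_, fun x => ⟨univ.filter (x · = true), ?_⟩⟩
  · ext j; simpa [ofFinset] using congrFun hst j
  · ext j; simp [ofFinset]

lemma ofFinset_compl (s : Finset ι) : ofFinset sᶜ = (ofFinset s)ᶜ := by
  ext j; simp [ofFinset]

lemma spinSum_ofFinset (s : Finset ι) : spinSum (ofFinset s) = 2 * #s - Fintype.card ι := by
  simp [spinSum, spin, ofFinset, sum_sub_distrib, mul_comm]

theorem sum_sub_compl_mul_spinSum_nonneg {f : (ι → Bool) → ℝ} (hf : Monotone f) {w : ℝ → ℝ}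
    (hw : ∀ s, 0 ≤ w s) (hw0 : ∀ s ≤ 0, w s = 0) :
    0 ≤ ∑ x, (f x - f xᶜ) * w (spinSum x) := by
  rw [← ofFinset_bijective.sum_comp]
  simp only [← ofFinset_compl, spinSum_ofFinset]
  refine sum_sub_compl_mul_card_nonneg (hf.comp ofFinset_mono)
    (φ := fun m => w (2 * m - Fintype.card ι)) (fun _ => hw _) fun m hm => hw0 _ ?_
  rw [sub_nonpos]
  exact_mod_cast hm

lemma cexpect_mono {f g : (ι → Bool) → ℝ} (h : ∀ x, f x ≤ g x) : cexpect f ≤ cexpect g :=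
  div_le_div_of_nonneg_right (sum_le_sum fun x _ => h x) (by positivity)

lemma cexpect_const (c : ℝ) : cexpect (fun _ : ι → Bool => c) = c := by
  simp [cexpect]

lemma cexpect_mul_const (f : (ι → Bool) → ℝ) (c : ℝ) :
    cexpect (fun x => f x * c) = cexpect f * c := by
  simp only [cexpect, ← sum_mul, div_mul_eq_mul_div]

theorem cexpect_exp_mul_spinSum (t : ℝ) :
    cexpect (fun x : ι → Bool => exp (t * spinSum x)) = cosh t ^ Fintype.card ι := by
  have hprod : ∑ x : ι → Bool, exp (t * spinSum x) =
      ∏ _j : ι, ∑ b : Bool, exp (t * (2 * (if b then (1 : ℝ) else 0) - 1)) := by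
    rw [Fintype.prod_sum]
    simp only [spinSum, spin, mul_sum, exp_sum]
  rw [cexpect, hprod, prod_const, card_univ, Fintype.sum_bool, cosh_eq, div_pow]
  norm_num

theorem cexpect_max_spinSum_sub_le (T : ℝ) {t : ℝ} (ht : 0 < t) :
    cexpect (fun x : ι → Bool => max (spinSum x - T) 0) ≤
      exp (Fintype.card ι * t ^ 2 / 2 - t * T) / t := by
  have hpt : ∀ u : ℝ, max u 0 ≤ exp (t * u) / t := fun u => by
    rw [le_div_iff₀ ht]
    rcases le_total u 0 with hu | hu
    · rw [max_eq_right hu, zero_mul]; positivity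
    · rw [max_eq_left hu]; linarith [add_one_le_exp (t * u)]
  calc cexpect (fun x => max (spinSum x - T) 0)
      ≤ cexpect (fun x => exp (t * spinSum x) * (exp (-(t * T)) / t)) := cexpect_mono fun x => by
        rw [mul_div_assoc', ← exp_add, ← mul_neg, ← mul_add, ← sub_eq_add_neg]; exact hpt _
    _ = cosh t ^ Fintype.card ι * (exp (-(t * T)) / t) := by
        rw [cexpect_mul_const, cexpect_exp_mul_spinSum]
    _ ≤ exp (t ^ 2 / 2) ^ Fintype.card ι * (exp (-(t * T)) / t) := by
        gcongr; exact cosh_le_exp_half_sq t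
    _ = exp (Fintype.card ι * t ^ 2 / 2 - t * T) / t := by
        rw [← exp_nat_mul, mul_div_assoc', ← exp_add]; ring_nf

theorem sum_mul_spinSum_le {f : (ι → Bool) → ℝ} (hf : Monotone f)
    (hf01 : ∀ x, 0 ≤ f x ∧ f x ≤ 1) {T : ℝ} (hT : 0 ≤ T) :
    ∑ x, f x * spinSum x ≤
      T * ∑ x, f x * majority univ x + ∑ x : ι → Bool, max (spinSum x - T) 0 := by
  set w : ℝ → ℝ := fun s => if 0 < s then T - min s T else 0
  have hdecomp : ∀ s : ℝ, (if 0 < s then s else 0) =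
      T * (if 0 < s then Real.sign s else 0) - w s + max (s - T) 0 := fun s => by
    simp only [w]
    split_ifs with hs
    · rw [Real.sign_of_pos hs]
      rcases le_total s T with hsT | hsT
      · rw [min_eq_left hsT, max_eq_right (by linarith)]; ring
      · rw [min_eq_right hsT, max_eq_left (by linarith)]; ring
    · simp only [mul_zero, sub_zero, zero_add, max_eq_right (by linarith : s - T ≤ 0)]
  have hbulk := sum_sub_compl_mul_spinSum_nonneg hf (w := w)
    (fun s => by simp only [w]; split_ifs <;> simp) fun s hs => if_neg hs.not_gt
  have htail : ∀ x, (f x - f xᶜ) * max (spinSum x - T) 0 ≤ max (spinSum x - T) 0 := fun x =>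
    mul_le_of_le_one_left (le_max_right _ _) (by linarith [hf01 x, hf01 xᶜ])
  have hM : ∑ x, f x * majority univ x =
      ∑ x, (f x - f xᶜ) * if 0 < spinSum x then Real.sign (spinSum x) else 0 :=
    sum_mul_odd_spinSum (fun _ => Real.sign_neg) f
  calc ∑ x, f x * spinSum x
      = ∑ x, (T * ((f x - f xᶜ) * if 0 < spinSum x then Real.sign (spinSum x) else 0) -
          (f x - f xᶜ) * w (spinSum x) + (f x - f xᶜ) * max (spinSum x - T) 0) := by
        refine (sum_mul_odd_spinSum (h := id) (fun _ => rfl) f).trans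
          (sum_congr rfl fun x _ => ?_)
        simp only [id, hdecomp]
        ring
    _ = T * ∑ x, ((f x - f xᶜ) * if 0 < spinSum x then Real.sign (spinSum x) else 0) -
          ∑ x, (f x - f xᶜ) * w (spinSum x) + ∑ x, (f x - f xᶜ) * max (spinSum x - T) 0 := by
        rw [sum_add_distrib, sum_sub_distrib, mul_sum]
    _ ≤ _ := by rw [hM]; linarith [sum_le_sum fun x (_ : x ∈ univ) => htail x]

theorem totalInf_le_of_monotone {f : (ι → Bool) → ℝ} (hf : Monotone f)
    (hf01 : ∀ x, 0 ≤ f x ∧ f x ≤ 1) {T t : ℝ} (hT : 0 ≤ T) (ht : 0 < t) :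
    totalInf f ≤ 2 * (T * cexpect (fun x => f x * majority univ x) +
      exp (Fintype.card ι * t ^ 2 / 2 - t * T) / t) := by
  have hE : cexpect (fun x => f x * spinSum x) ≤ T * cexpect (fun x => f x * majority univ x) +
      cexpect (fun x : ι → Bool => max (spinSum x - T) 0) := by
    simp only [cexpect]
    rw [mul_div_assoc', ← add_div]
    exact div_le_div_of_nonneg_right (sum_mul_spinSum_le hf hf01 hT) (by positivity)
  rw [totalInf_eq_of_monotone hf]
  linarith [cexpect_max_spinSum_sub_le (ι := ι) T ht]

/-- Bound on total influence via correlation with majority. -/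
theorem totalInf_le_of_corr_majority :
    ∃ C : ℝ, ∀ (n : ℕ) (f : Cube n → ℝ),
      (∀ x y : Cube n, (∀ j, x j ≤ y j) → f x ≤ f y) →
      (∀ x, 0 ≤ f x ∧ f x ≤ 1) →
      0 < cexpect (fun x => f x * majority Finset.univ x) →
      totalInf f ≤ C * Real.sqrt n *
        cexpect (fun x => f x * majority Finset.univ x) *
        (1 + Real.sqrt (-Real.log (cexpect (fun x => f x * majority Finset.univ x)))) := by
  refine ⟨5, fun n f hmono hf01 hpos => ?_⟩
  rcases n.eq_zero_or_pos with rfl | hn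
  · simp [totalInf]
  set α := cexpect (fun x => f x * majority Finset.univ x)
  have hα1 : α ≤ 1 := by
    refine (cexpect_mono fun x => ?_).trans_eq (cexpect_const 1)
    obtain ⟨h0, h1⟩ := hf01 x
    rw [majority_univ]
    rcases Real.sign_apply_eq (spinSum x) with h | h | h <;> rw [h] <;> linarith
  set L := -log α
  have hL : 0 ≤ L := neg_nonneg.2 (log_nonpos hpos.le hα1)
  set a := 2 * (1 + √L)
  have hsn : 0 < √(n : ℝ) := by positivity
  have hexp : exp (-(a ^ 2 / 2)) ≤ α := by
    calc exp (-(a ^ 2 / 2)) ≤ exp (-L) := exp_le_exp.2 (by nlinarith [sq_sqrt hL, sqrt_nonneg L])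
      _ = α := by rw [neg_neg, exp_log hpos]
  have key := totalInf_le_of_monotone (fun x y hxy => hmono x y hxy) hf01
    (T := a * √n) (t := a / √n) (by positivity) (by positivity)
  have hexponent :
      (Fintype.card (Fin n) : ℝ) * (a / √n) ^ 2 / 2 - a / √n * (a * √n) = -(a ^ 2 / 2) := by
    rw [Fintype.card_fin, div_pow, sq_sqrt (Nat.cast_nonneg n)]
    field_simp
    ring
  rw [hexponent] at key
  calc totalInf f ≤ 2 * (a * √n * α + exp (-(a ^ 2 / 2)) / (a / √n)) := key
    _ ≤ 2 * (a * √n * α + α * √n / 2) := by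
        rw [div_div_eq_mul_div]
        gcongr
        linarith [sqrt_nonneg L]
    _ ≤ 5 * √n * α * (1 + √L) := by
        nlinarith [mul_nonneg (mul_nonneg hsn.le hpos.le) (sqrt_nonneg L)]

end BKS
end

section
/- There is a universal constant C such that for every n, every K ⊆ [n], and every monotone function f : Ω_n → [0,1] with E(f M_K) > 0: I_K(f) ≤ C √(|K|) · E(f M_K) · (1 + √(−log E(f M_K))). -/
namespace BKS

open Finset Filter

variable {ι : Type} [Fintype ι] [DecidableEq ι]

set_option linter.unusedSectionVars false
set_option linter.unnecessarySeqFocus false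

section Helpers

variable {ι : Type} [Fintype ι] [DecidableEq ι]

/-- ±1 coordinate function. -/
noncomputable def eps (k : ι) (x : ι → Bool) : ℝ := if x k then 1 else -1

lemma eps_eq_aux (k : ι) (x : ι → Bool) :
    (2 * (if x k then (1:ℝ) else 0) - 1) = eps k x := by
  cases h : x k <;> simp [eps, h] <;> norm_num

lemma flipBit_apply_self (k : ι) (x : ι → Bool) : flipBit k x k = !x k := by
  simp [flipBit]

lemma flipBit_apply_ne (k j : ι) (x : ι → Bool) (h : j ≠ k) : flipBit k x j = x j := by
  simp [flipBit, Function.update_of_ne h]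

lemma flipBit_flipBit (k : ι) (x : ι → Bool) : flipBit k (flipBit k x) = x := by
  funext j
  by_cases h : j = k
  · subst h; rw [flipBit_apply_self, flipBit_apply_self, Bool.not_not]
  · rw [flipBit_apply_ne _ _ _ h, flipBit_apply_ne _ _ _ h]

lemma eps_flipBit (k : ι) (x : ι → Bool) : eps k (flipBit k x) = - eps k x := by
  unfold eps
  rw [flipBit_apply_self]
  cases h : x k <;> simp

lemma influence_eq_corr (k : ι) (f : (ι → Bool) → ℝ)
    (hmono : ∀ x y : ι → Bool, (∀ j, x j ≤ y j) → f x ≤ f y) :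
    influence k f = 2 * cexpect (fun x => f x * eps k x) := by
  unfold influence cexpect
  rw [mul_div_assoc']
  congr 1
  have hpt : ∀ x : ι → Bool, |f (flipBit k x) - f x| = (f x - f (flipBit k x)) * eps k x := by
    intro x
    cases h : x k
    · -- x k = false : x ≤ flipBit k x
      have hle : ∀ j, x j ≤ flipBit k x j := by
        intro j
        by_cases hj : j = k
        · subst hj; rw [flipBit_apply_self, h]; exact Bool.false_le _
        · rw [flipBit_apply_ne _ _ _ hj]
      have hf := hmono _ _ hle
      rw [abs_of_nonneg (by linarith), eps, if_neg (by simp [h])]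
      ring
    · -- x k = true : flipBit k x ≤ x
      have hle : ∀ j, flipBit k x j ≤ x j := by
        intro j
        by_cases hj : j = k
        · subst hj; rw [flipBit_apply_self, h]; exact Bool.le_true _
        · rw [flipBit_apply_ne _ _ _ hj]
      have hf := hmono _ _ hle
      rw [abs_of_nonpos (by linarith), eps, if_pos h]
      ring
  calc ∑ x : ι → Bool, |f (flipBit k x) - f x|
      = ∑ x : ι → Bool, ((f x) * eps k x - f (flipBit k x) * eps k x) := by
        refine Finset.sum_congr rfl fun x _ => ?_
        rw [hpt x]; ring
    _ = (∑ x : ι → Bool, f x * eps k x) - ∑ x : ι → Bool, f (flipBit k x) * eps k x := by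
        rw [Finset.sum_sub_distrib]
    _ = 2 * ∑ x : ι → Bool, f x * eps k x := by
        have hbij : Function.Bijective (flipBit k (ι := ι)) :=
          Function.Involutive.bijective (flipBit_flipBit k)
        have hre : ∑ x : ι → Bool, f (flipBit k x) * eps k x
            = ∑ x : ι → Bool, f x * eps k (flipBit k x) := by
          refine Fintype.sum_bijective (flipBit k) hbij _ _ fun x => ?_
          rw [flipBit_flipBit]
        rw [hre]
        have : ∑ x : ι → Bool, f x * eps k (flipBit k x)
            = - ∑ x : ι → Bool, f x * eps k x := by
          rw [← Finset.sum_neg_distrib]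
          refine Finset.sum_congr rfl fun x _ => ?_
          rw [eps_flipBit]; ring
        rw [this]; ring

lemma sum_influence_eq (K : Finset ι) (f : (ι → Bool) → ℝ)
    (hmono : ∀ x y : ι → Bool, (∀ j, x j ≤ y j) → f x ≤ f y) :
    ∑ k ∈ K, influence k f = 2 * cexpect (fun x => f x * ∑ j ∈ K, eps j x) := by
  have : ∀ k ∈ K, influence k f = 2 * cexpect (fun x => f x * eps k x) :=
    fun k _ => influence_eq_corr k f hmono
  rw [Finset.sum_congr rfl this]
  unfold cexpect
  rw [← Finset.mul_sum, ← Finset.sum_div]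
  congr 2
  rw [Finset.sum_comm]
  exact Finset.sum_congr rfl fun x _ => (Finset.mul_sum _ _ _).symm

end Helpers
/-- Number of `true` coordinates inside `K`. -/
def cnt (K : Finset ι) (x : ι → Bool) : ℕ := (K.filter fun j => x j = true).card

lemma cnt_le (K : Finset ι) (x : ι → Bool) : cnt K x ≤ K.card := Finset.card_filter_le _ _

lemma sum_eps_eq (K : Finset ι) (x : ι → Bool) :
    ∑ j ∈ K, eps j x = 2 * (cnt K x : ℝ) - K.card := by
  have : ∀ j ∈ K, eps j x = 2 * (if x j = true then (1:ℝ) else 0) - 1 := by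
    intro j _; rw [← eps_eq_aux]
  rw [Finset.sum_congr rfl this, Finset.sum_sub_distrib, ← Finset.mul_sum, Finset.sum_boole,
    Finset.sum_const, nsmul_eq_mul, mul_one]
  rfl

lemma majority_eq_cnt (K : Finset ι) (x : ι → Bool) :
    majority K x = Real.sign (2 * (cnt K x : ℝ) - K.card) := by
  unfold majority
  rw [Finset.sum_congr rfl fun j _ => eps_eq_aux j x, sum_eps_eq]

/-- Sum of `f` over the slice of weight `w`. -/
noncomputable def sliceSum (K : Finset ι) (f : (ι → Bool) → ℝ) (w : ℕ) : ℝ :=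
  ∑ x ∈ Finset.univ.filter (fun x => cnt K x = w), f x

lemma group_by_weight (K : Finset ι) (g : (ι → Bool) → ℝ) (h : ℕ → ℝ) :
    ∑ x : ι → Bool, g x * h (cnt K x)
      = ∑ w ∈ Finset.range (K.card + 1), sliceSum K g w * h w := by
  unfold sliceSum
  rw [← Finset.sum_fiberwise_of_maps_to
    (fun x _ => Finset.mem_range.2 (Nat.lt_succ_of_le (cnt_le K x)))
    (fun x => g x * h (cnt K x))]
  refine Finset.sum_congr rfl fun w _ => ?_
  rw [Finset.sum_mul]
  refine Finset.sum_congr rfl fun x hx => ?_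
  rw [(Finset.mem_filter.1 hx).2]

lemma sliceSum_nonneg (K : Finset ι) (f : (ι → Bool) → ℝ) (hf0 : ∀ x, 0 ≤ f x) (w : ℕ) :
    0 ≤ sliceSum K f w :=
  Finset.sum_nonneg fun x _ => hf0 x

lemma cnt_update_true (K : Finset ι) (x : ι → Bool) (j : ι) (hj : j ∈ K) (hx : x j = false) :
    cnt K (Function.update x j true) = cnt K x + 1 := by
  unfold cnt
  have : K.filter (fun i => Function.update x j true i = true)
      = insert j (K.filter fun i => x i = true) := by
    ext i
    simp only [Finset.mem_filter, Finset.mem_insert]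
    by_cases hij : i = j
    · subst hij; simp [Function.update_self, hj]
    · simp [Function.update_of_ne hij, hij]
  rw [this, Finset.card_insert_of_notMem (by simp [Finset.mem_filter, hx])]

lemma cnt_update_false (K : Finset ι) (y : ι → Bool) (j : ι) (hj : j ∈ K) (hy : y j = true) :
    cnt K (Function.update y j false) = cnt K y - 1 := by
  unfold cnt
  have : K.filter (fun i => Function.update y j false i = true)
      = (K.filter fun i => y i = true).erase j := by
    ext i
    simp only [Finset.mem_filter, Finset.mem_erase]
    by_cases hij : i = j
    · subst hij; simp [Function.update_self]
    · simp [Function.update_of_ne hij, hij, and_comm]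
  rw [this, Finset.card_erase_of_mem (by simp [Finset.mem_filter, hj, hy])]

lemma update_update_true_false (x : ι → Bool) (j : ι) (hx : x j = false) :
    Function.update (Function.update x j true) j false = x := by
  rw [Function.update_idem, ← hx, Function.update_eq_self]

lemma update_update_false_true (y : ι → Bool) (j : ι) (hy : y j = true) :
    Function.update (Function.update y j false) j true = y := by
  rw [Function.update_idem, ← hy, Function.update_eq_self]

lemma slice_step (K : Finset ι) (f : (ι → Bool) → ℝ)
    (hmono : ∀ x y : ι → Bool, (∀ j, x j ≤ y j) → f x ≤ f y)
    (w : ℕ) (hw : w < K.card) :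
    ((K.card : ℝ) - w) * sliceSum K f w ≤ ((w : ℝ) + 1) * sliceSum K f (w + 1) := by
  classical
  set N := K.card with hN
  have hcard_false : ∀ x : ι → Bool, cnt K x = w →
      (K.filter fun j => x j = false).card = N - w := by
    intro x hx
    have h1 := Finset.card_filter_add_card_filter_not (s := K)
      (p := fun j => x j = true)
    have h2 : (K.filter fun j => ¬ (x j = true)) = (K.filter fun j => x j = false) := by
      refine Finset.filter_congr fun j _ => ?_
      simp [Bool.not_eq_true]
    rw [h2] at h1
    unfold cnt at hx
    omega
  have lhs_eq : ((N : ℝ) - w) * sliceSum K f w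
      = ∑ x ∈ Finset.univ.filter (fun x => cnt K x = w),
          ∑ j ∈ K.filter (fun j => x j = false), f x := by
    unfold sliceSum
    rw [Finset.mul_sum]
    refine Finset.sum_congr rfl fun x hx => ?_
    rw [Finset.sum_const, nsmul_eq_mul, hcard_false x (Finset.mem_filter.1 hx).2,
      Nat.cast_sub hw.le]
  have rhs_eq : ((w : ℝ) + 1) * sliceSum K f (w + 1)
      = ∑ y ∈ Finset.univ.filter (fun y => cnt K y = w + 1),
          ∑ j ∈ K.filter (fun j => y j = true), f y := by
    unfold sliceSum
    rw [Finset.mul_sum]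
    refine Finset.sum_congr rfl fun y hy => ?_
    have : (K.filter fun j => y j = true).card = w + 1 := (Finset.mem_filter.1 hy).2
    rw [Finset.sum_const, nsmul_eq_mul, this]
    push_cast; ring
  rw [lhs_eq, rhs_eq]
  have mid : ∑ x ∈ Finset.univ.filter (fun x => cnt K x = w),
          ∑ j ∈ K.filter (fun j => x j = false), f x
      ≤ ∑ x ∈ Finset.univ.filter (fun x => cnt K x = w),
          ∑ j ∈ K.filter (fun j => x j = false), f (Function.update x j true) := by
    refine Finset.sum_le_sum fun x _ => Finset.sum_le_sum fun j _ => ?_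
    refine hmono _ _ fun i => ?_
    by_cases hij : i = j
    · subst hij; rw [Function.update_self]; exact Bool.le_true _
    · rw [Function.update_of_ne hij]
  refine le_trans mid (le_of_eq ?_)
  rw [Finset.sum_sigma', Finset.sum_sigma']
  refine Finset.sum_nbij' (fun p => ⟨Function.update p.1 p.2 true, p.2⟩)
    (fun p => ⟨Function.update p.1 p.2 false, p.2⟩) ?_ ?_ ?_ ?_ ?_
  · rintro ⟨x, j⟩ hp
    simp only [Finset.mem_sigma, Finset.mem_filter, Finset.mem_univ, true_and] at hp ⊢
    exact ⟨by rw [cnt_update_true K x j hp.2.1 hp.2.2, hp.1], hp.2.1, by rw [Function.update_self]⟩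
  · rintro ⟨y, j⟩ hp
    simp only [Finset.mem_sigma, Finset.mem_filter, Finset.mem_univ, true_and] at hp ⊢
    exact ⟨by rw [cnt_update_false K y j hp.2.1 hp.2.2, hp.1]; omega, hp.2.1,
      by rw [Function.update_self]⟩
  · rintro ⟨x, j⟩ hp
    simp only [Finset.mem_sigma, Finset.mem_filter, Finset.mem_univ, true_and] at hp
    simp only [Sigma.mk.inj_iff, heq_eq_eq]
    exact ⟨update_update_true_false x j hp.2.2, trivial⟩
  · rintro ⟨y, j⟩ hp
    simp only [Finset.mem_sigma, Finset.mem_filter, Finset.mem_univ, true_and] at hp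
    simp only [Sigma.mk.inj_iff, heq_eq_eq]
    exact ⟨update_update_false_true y j hp.2.2, trivial⟩
  · rintro ⟨x, j⟩ _
    rfl

lemma sliceSum_reflect (K : Finset ι) (f : (ι → Bool) → ℝ)
    (hmono : ∀ x y : ι → Bool, (∀ j, x j ≤ y j) → f x ≤ f y)
    (hf0 : ∀ x, 0 ≤ f x) (w : ℕ) (hwN : w ≤ K.card) (hw : K.card < 2 * w) :
    sliceSum K f (K.card - w) ≤ sliceSum K f w := by
  classical
  set N := K.card with hN
  set m : ℕ → ℝ := fun v => sliceSum K f v / (N.choose v : ℝ) with hm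
  have step : ∀ v, v < N → m v ≤ m (v + 1) := by
    intro v hv
    have hc1 : (0:ℝ) < (N.choose v : ℝ) := by
      exact_mod_cast Nat.choose_pos hv.le
    have hc2 : (0:ℝ) < (N.choose (v+1) : ℝ) := by
      exact_mod_cast Nat.choose_pos hv
    rw [hm, div_le_div_iff₀ hc1 hc2]
    have hstep := slice_step K f hmono v hv
    have hch : ((v:ℝ) + 1) * (N.choose (v+1) : ℝ) = (N.choose v : ℝ) * ((N:ℝ) - v) := by
      have := Nat.choose_succ_right_eq N v
      have hcast : ((N.choose (v+1) * (v+1) : ℕ) : ℝ) = ((N.choose v * (N - v) : ℕ) : ℝ) := by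
        exact_mod_cast congrArg (Nat.cast (R := ℝ)) this
      push_cast [Nat.cast_sub hv.le] at hcast
      linarith
    have h2 := mul_le_mul_of_nonneg_right hstep hc1.le
    rw [← hN] at h2
    have h3 : ((v:ℝ) + 1) * (sliceSum K f v * (N.choose (v+1) : ℝ))
        ≤ ((v:ℝ) + 1) * (sliceSum K f (v+1) * (N.choose v : ℝ)) := by
      calc ((v:ℝ) + 1) * (sliceSum K f v * (N.choose (v+1) : ℝ))
          = sliceSum K f v * (((v:ℝ) + 1) * (N.choose (v+1) : ℝ)) := by ring
        _ = ((N:ℝ) - v) * sliceSum K f v * (N.choose v : ℝ) := by rw [hch]; ring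
        _ ≤ ((v:ℝ) + 1) * sliceSum K f (v+1) * (N.choose v : ℝ) := h2
        _ = ((v:ℝ) + 1) * (sliceSum K f (v+1) * (N.choose v : ℝ)) := by ring
    exact le_of_mul_le_mul_left h3 (by positivity)
  have mono : ∀ a b : ℕ, a ≤ b → b ≤ N → m a ≤ m b := by
    intro a b hab hbN
    induction b, hab using Nat.le_induction with
    | base => exact le_refl _
    | succ b hab ih => exact le_trans (ih (by omega)) (step b (by omega))
  have hmw := mono (N - w) w (by omega) hwN
  have hclt : (0:ℝ) < (N.choose w : ℝ) := by exact_mod_cast Nat.choose_pos hwN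
  have e1 : sliceSum K f (N - w) = m (N - w) * (N.choose (N - w) : ℝ) := by
    rw [hm, div_mul_cancel₀]
    have : (0:ℝ) < (N.choose (N-w) : ℝ) := by
      exact_mod_cast Nat.choose_pos (Nat.sub_le _ _)
    exact this.ne'
  have e2 : sliceSum K f w = m w * (N.choose w : ℝ) := by
    rw [hm, div_mul_cancel₀]
    exact hclt.ne'
  rw [e1, e2, Nat.choose_symm hwN]
  exact mul_le_mul_of_nonneg_right hmw hclt.le
lemma sum_exp_eps (K : Finset ι) (l : ℝ) :
    ∑ x : ι → Bool, Real.exp (l * ∑ j ∈ K, eps j x)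
      = 2 ^ Fintype.card ι * Real.cosh l ^ K.card := by
  classical
  have hpt : ∀ x : ι → Bool, Real.exp (l * ∑ j ∈ K, eps j x)
      = ∏ j : ι, (if j ∈ K then Real.exp (l * (if x j then (1:ℝ) else -1)) else 1) := by
    intro x
    calc Real.exp (l * ∑ j ∈ K, eps j x)
        = ∏ j ∈ K, Real.exp (l * (if x j then (1:ℝ) else -1)) := by
          rw [Finset.mul_sum, Real.exp_sum]
          exact Finset.prod_congr rfl fun j _ => by rw [eps]
      _ = ∏ j : ι, (if j ∈ K then Real.exp (l * (if x j then (1:ℝ) else -1)) else 1) := by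
          rw [Fintype.prod_ite_mem]
  rw [Finset.sum_congr rfl fun x _ => hpt x]
  rw [← Fintype.prod_sum (fun (j : ι) (b : Bool) =>
    if j ∈ K then Real.exp (l * (if b then (1:ℝ) else -1)) else 1)]
  have hcosh : (2:ℝ) * Real.cosh l = Real.exp l + Real.exp (-l) := by
    rw [Real.cosh_eq]; ring
  have hin : ∀ j : ι, (∑ b : Bool, if j ∈ K then Real.exp (l * (if b then (1:ℝ) else -1)) else 1)
      = if j ∈ K then 2 * Real.cosh l else 2 := by
    intro j
    rw [Fintype.sum_bool]
    by_cases hj : j ∈ K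
    · simp [hj, hcosh, mul_one, mul_neg_one]
    · simp [hj]; norm_num
  rw [Finset.prod_congr rfl fun j _ => hin j, Finset.prod_ite, Finset.prod_const,
    Finset.prod_const, Finset.filter_univ_mem]
  have hcard : (Finset.univ.filter fun j => ¬ j ∈ K).card = Fintype.card ι - K.card := by
    have h1 := Finset.card_filter_add_card_filter_not
      (s := (Finset.univ : Finset ι)) (p := fun j => j ∈ K)
    rw [Finset.filter_univ_mem, Finset.card_univ] at h1
    omega
  rw [hcard, mul_pow]
  have hNn : K.card ≤ Fintype.card ι := by
    simpa [Finset.card_univ] using Finset.card_le_card (Finset.subset_univ K)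
  rw [mul_comm ((2:ℝ)^K.card) _, mul_assoc, ← pow_add,
    Nat.add_sub_cancel' hNn, mul_comm]

lemma chernoff_pointwise (T l a : ℝ) (hT : 0 ≤ T) (hl : 0 < l) :
    (if T < |a| then |a| else 0)
      ≤ (T + 1/l) * (Real.exp (l * (a - T)) + Real.exp (l * (-a - T))) := by
  have hTl : (0:ℝ) < T + 1/l := by positivity
  have hpos : ∀ b : ℝ, T < b → b ≤ (T + 1/l) * Real.exp (l * (b - T)) := by
    intro b hb
    have h1 : l * (b - T) + 1 ≤ Real.exp (l * (b - T)) := Real.add_one_le_exp _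
    have h2 : (T + 1/l) * (l * (b - T) + 1) ≤ (T + 1/l) * Real.exp (l * (b - T)) :=
      mul_le_mul_of_nonneg_left h1 hTl.le
    have key : (T + 1/l) * (l * (b - T) + 1) = T + (b - T) + (T * (l * (b - T)) + 1/l) := by
      field_simp
      ring
    have h3 : 0 ≤ T * (l * (b - T)) := by
      have := sub_pos.2 hb
      positivity
    have h4 : (0:ℝ) < 1/l := by positivity
    nlinarith [h2, key]
  by_cases h : T < |a|
  · rw [if_pos h]
    rcases abs_cases a with ⟨ha, _⟩ | ⟨ha, _⟩
    · rw [ha] at h ⊢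
      have := hpos a h
      nlinarith [Real.exp_pos (l * (-a - T))]
    · rw [ha] at h ⊢
      have := hpos (-a) h
      nlinarith [Real.exp_pos (l * (a - T))]
  · rw [if_neg h]
    positivity

lemma sum_range_reflect' (N : ℕ) (F : ℕ → ℝ) :
    ∑ w ∈ Finset.range (N+1), F w = ∑ w ∈ Finset.range (N+1), F (N - w) := by
  have := Finset.sum_range_reflect F (N+1)
  simp only [Nat.add_sub_cancel] at this
  exact this.symm
lemma main_core (K : Finset ι) (f : (ι → Bool) → ℝ)
    (hmono : ∀ x y : ι → Bool, (∀ j, x j ≤ y j) → f x ≤ f y)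
    (hf01 : ∀ x, 0 ≤ f x ∧ f x ≤ 1) (T : ℝ) (hT : 0 ≤ T) :
    ∑ x : ι → Bool, f x * (∑ j ∈ K, eps j x)
      ≤ T * ∑ x : ι → Bool, f x * majority K x
        + ∑ x : ι → Bool,
            (if T < |∑ j ∈ K, eps j x| then |∑ j ∈ K, eps j x| else 0) := by
  classical
  have hf0 : ∀ x, 0 ≤ f x := fun x => (hf01 x).1
  set N := K.card with hN
  set c : ℕ → ℝ := fun w => 2 * (w:ℝ) - N with hc
  set S : ℕ → ℝ := fun w => sliceSum K f w with hS
  set tt : ℕ → ℝ := fun w => if T < |c w| then |c w| * S w else 0 with htt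
  have hS0 : ∀ w, 0 ≤ S w := fun w => sliceSum_nonneg K f hf0 w
  have htt0 : ∀ w, 0 ≤ tt w := by
    intro w
    rw [htt]
    dsimp only
    split
    · exact mul_nonneg (abs_nonneg _) (hS0 w)
    · exact le_refl 0
  have hcrefl : ∀ w ∈ Finset.range (N+1), c (N - w) = - c w := by
    intro w hw
    have hwN : w ≤ N := Nat.lt_succ_iff.1 (Finset.mem_range.1 hw)
    rw [hc]
    dsimp only
    rw [Nat.cast_sub hwN]
    ring
  -- the three grouped sums
  have hgroup1 : ∑ x : ι → Bool, f x * (∑ j ∈ K, eps j x)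
      = ∑ w ∈ Finset.range (N+1), S w * c w := by
    rw [← group_by_weight K f c]
    exact Finset.sum_congr rfl fun x _ => by rw [sum_eps_eq]
  have hgroup2 : ∑ x : ι → Bool, f x * majority K x
      = ∑ w ∈ Finset.range (N+1), S w * Real.sign (c w) := by
    rw [← group_by_weight K f (fun w => Real.sign (c w))]
    exact Finset.sum_congr rfl fun x _ => by rw [majority_eq_cnt]
  have hgroup3 : ∑ w ∈ Finset.range (N+1), tt w
      ≤ ∑ x : ι → Bool,
          (if T < |∑ j ∈ K, eps j x| then |∑ j ∈ K, eps j x| else 0) := by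
    have h1 : ∑ w ∈ Finset.range (N+1), tt w
        = ∑ x : ι → Bool, f x * (if T < |c (cnt K x)| then |c (cnt K x)| else 0) := by
      rw [group_by_weight K f (fun w => if T < |c w| then |c w| else 0)]
      refine Finset.sum_congr rfl fun w _ => ?_
      rw [htt]
      dsimp only
      split
      · ring
      · ring
    rw [h1]
    refine Finset.sum_le_sum fun x _ => ?_
    have hce : ∑ j ∈ K, eps j x = c (cnt K x) := by rw [sum_eps_eq]
    rw [hce]
    split
    · calc f x * |c (cnt K x)| ≤ 1 * |c (cnt K x)| :=
            mul_le_mul_of_nonneg_right (hf01 x).2 (abs_nonneg _)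
        _ = |c (cnt K x)| := one_mul _
    · rw [mul_zero]
  -- reflection facts
  have hd : ∀ w, w ≤ N → N < 2*w → S (N - w) ≤ S w := by
    intro w h1 h2
    exact sliceSum_reflect K f hmono hf0 w h1 h2
  -- key per-w inequality
  have hkey : ∀ w ∈ Finset.range (N+1),
      c w * (S w - S (N - w))
        ≤ T * (Real.sign (c w) * (S w - S (N - w))) + tt w + tt (N - w) := by
    intro w hw
    have hwN : w ≤ N := Nat.lt_succ_iff.1 (Finset.mem_range.1 hw)
    have httw := htt0 w
    have httw' := htt0 (N - w)
    rcases Nat.lt_trichotomy (2*w) N with h | h | h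
    · -- c w < 0
      have hcw : c w < 0 := by
        rw [hc]; dsimp only
        have : (2*w : ℝ) < N := by exact_mod_cast h
        linarith
      have hsgn : Real.sign (c w) = -1 := Real.sign_of_neg hcw
      have hdle : S w ≤ S (N - w) := by
        have h1 : N - (N - w) = w := by omega
        have := hd (N - w) (by omega) (by omega)
        rwa [h1] at this
      have hcNw : c (N - w) = - c w := hcrefl w hw
      by_cases hTc : T < - c w
      · have httNw : tt (N - w) = (- c w) * S (N - w) := by
          rw [htt]; dsimp only
          rw [hcNw, if_pos (by rwa [abs_of_pos (by linarith : (0:ℝ) < - c w)]),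
            abs_of_pos (by linarith : (0:ℝ) < - c w)]
        have h5 : (- c w) * (S (N - w) - S w) ≤ (- c w) * S (N - w) := by
          refine mul_le_mul_of_nonneg_left ?_ (by linarith)
          linarith [hS0 w]
        rw [hsgn, httNw]
        nlinarith [mul_nonneg hT (sub_nonneg.2 hdle)]
      · push_neg at hTc
        have h5 : (- c w) * (S (N - w) - S w) ≤ T * (S (N - w) - S w) :=
          mul_le_mul_of_nonneg_right hTc (by linarith)
        rw [hsgn]
        nlinarith
    · -- c w = 0
      have hcw : c w = 0 := by
        rw [hc]; dsimp only
        have : (2*w : ℝ) = N := by exact_mod_cast h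
        linarith
      rw [hcw, Real.sign_zero]
      nlinarith
    · -- c w > 0
      have hcw : 0 < c w := by
        rw [hc]; dsimp only
        have : (N:ℝ) < 2*w := by exact_mod_cast h
        linarith
      have hsgn : Real.sign (c w) = 1 := Real.sign_of_pos hcw
      have hdge : S (N - w) ≤ S w := hd w hwN h
      by_cases hTc : T < c w
      · have httw2 : tt w = c w * S w := by
          rw [htt]; dsimp only
          rw [if_pos (by rwa [abs_of_pos hcw]), abs_of_pos hcw]
        have h5 : c w * (S w - S (N - w)) ≤ c w * S w := by
          refine mul_le_mul_of_nonneg_left ?_ hcw.le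
          linarith [hS0 (N - w)]
        rw [hsgn, httw2]
        nlinarith [mul_nonneg hT (sub_nonneg.2 hdge)]
      · push_neg at hTc
        have h5 : c w * (S w - S (N - w)) ≤ T * (S w - S (N - w)) :=
          mul_le_mul_of_nonneg_right hTc (by linarith)
        rw [hsgn]
        nlinarith
  -- reflection identities
  have hE1 : 2 * ∑ w ∈ Finset.range (N+1), S w * c w
      = ∑ w ∈ Finset.range (N+1), c w * (S w - S (N - w)) := by
    have h1 : ∑ w ∈ Finset.range (N+1), S w * c w
        = ∑ w ∈ Finset.range (N+1), S (N - w) * c (N - w) :=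
      sum_range_reflect' N (fun w => S w * c w)
    calc 2 * ∑ w ∈ Finset.range (N+1), S w * c w
        = (∑ w ∈ Finset.range (N+1), S w * c w)
          + ∑ w ∈ Finset.range (N+1), S (N - w) * c (N - w) := by rw [← h1]; ring
      _ = ∑ w ∈ Finset.range (N+1), (S w * c w + S (N - w) * c (N - w)) := by
          rw [Finset.sum_add_distrib]
      _ = ∑ w ∈ Finset.range (N+1), c w * (S w - S (N - w)) := by
          refine Finset.sum_congr rfl fun w hw => ?_
          rw [hcrefl w hw]; ring
  have hE2 : 2 * ∑ w ∈ Finset.range (N+1), S w * Real.sign (c w)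
      = ∑ w ∈ Finset.range (N+1), Real.sign (c w) * (S w - S (N - w)) := by
    have h1 : ∑ w ∈ Finset.range (N+1), S w * Real.sign (c w)
        = ∑ w ∈ Finset.range (N+1), S (N - w) * Real.sign (c (N - w)) :=
      sum_range_reflect' N (fun w => S w * Real.sign (c w))
    calc 2 * ∑ w ∈ Finset.range (N+1), S w * Real.sign (c w)
        = (∑ w ∈ Finset.range (N+1), S w * Real.sign (c w))
          + ∑ w ∈ Finset.range (N+1), S (N - w) * Real.sign (c (N - w)) := by rw [← h1]; ring
      _ = ∑ w ∈ Finset.range (N+1), (S w * Real.sign (c w)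
            + S (N - w) * Real.sign (c (N - w))) := by rw [Finset.sum_add_distrib]
      _ = ∑ w ∈ Finset.range (N+1), Real.sign (c w) * (S w - S (N - w)) := by
          refine Finset.sum_congr rfl fun w hw => ?_
          rw [hcrefl w hw, Real.sign_neg]; ring
  have hE3 : ∑ w ∈ Finset.range (N+1), tt (N - w) = ∑ w ∈ Finset.range (N+1), tt w :=
    (sum_range_reflect' N tt).symm
  -- combine
  have hsum : ∑ w ∈ Finset.range (N+1), c w * (S w - S (N - w))
      ≤ ∑ w ∈ Finset.range (N+1),
          (T * (Real.sign (c w) * (S w - S (N - w))) + tt w + tt (N - w)) :=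
    Finset.sum_le_sum hkey
  rw [hgroup1, hgroup2]
  have hexp : ∑ w ∈ Finset.range (N+1),
      (T * (Real.sign (c w) * (S w - S (N - w))) + tt w + tt (N - w))
      = T * (∑ w ∈ Finset.range (N+1), Real.sign (c w) * (S w - S (N - w)))
        + 2 * ∑ w ∈ Finset.range (N+1), tt w := by
    rw [Finset.sum_add_distrib, Finset.sum_add_distrib, hE3, ← Finset.mul_sum]
    ring
  rw [hexp] at hsum
  rw [← hE2] at hsum
  rw [← hE1] at hsum
  -- hsum : 2 * Σ S c ≤ T * (2 * Σ S sign) + 2 * Σ tt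
  have h6 : ∑ w ∈ Finset.range (N+1), S w * c w
      ≤ T * (∑ w ∈ Finset.range (N+1), S w * Real.sign (c w))
        + ∑ w ∈ Finset.range (N+1), tt w := by linarith
  calc ∑ w ∈ Finset.range (N+1), S w * c w
      ≤ T * (∑ w ∈ Finset.range (N+1), S w * Real.sign (c w))
        + ∑ w ∈ Finset.range (N+1), tt w := h6
    _ ≤ T * (∑ w ∈ Finset.range (N+1), S w * Real.sign (c w))
        + ∑ x : ι → Bool,
            (if T < |∑ j ∈ K, eps j x| then |∑ j ∈ K, eps j x| else 0) := by
        linarith [hgroup3]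
lemma majority_le_one (K : Finset ι) (x : ι → Bool) : majority K x ≤ 1 := by
  unfold majority
  rcases Real.sign_apply_eq (∑ j ∈ K, (2 * (if x j then (1:ℝ) else 0) - 1)) with h | h | h <;>
    rw [h] <;> norm_num

set_option maxHeartbeats 2000000 in
/-- Bound on the influence sum over K via correlation with the majority on K. -/
theorem influence_sum_le_of_corr_majority :
    ∃ C : ℝ, ∀ (n : ℕ) (K : Finset (Fin n)) (f : Cube n → ℝ),
      (∀ x y : Cube n, (∀ j, x j ≤ y j) → f x ≤ f y) →
      (∀ x, 0 ≤ f x ∧ f x ≤ 1) →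
      0 < cexpect (fun x => f x * majority K x) →
      (∑ k ∈ K, influence k f) ≤ C * Real.sqrt K.card *
        cexpect (fun x => f x * majority K x) *
        (1 + Real.sqrt (-Real.log (cexpect (fun x => f x * majority K x)))) := by
  refine ⟨15, ?_⟩
  intro n K f hmono hf01 hpos
  by_cases hK : K = ∅
  · subst hK
    simp
  set ε := cexpect (fun x => f x * majority K x) with hεdef
  have hN1 : 1 ≤ K.card := Finset.card_pos.2 (Finset.nonempty_iff_ne_empty.2 hK)
  set D : ℝ := 2 ^ Fintype.card (Fin n) with hD
  have hD0 : (0:ℝ) < D := by rw [hD]; positivity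
  have hf0 : ∀ x, 0 ≤ f x := fun x => (hf01 x).1
  -- ε ≤ 1
  have hε1 : ε ≤ 1 := by
    rw [hεdef]
    unfold cexpect
    rw [div_le_one (by positivity)]
    calc ∑ x : Cube n, f x * majority K x ≤ ∑ x : Cube n, 1 := by
          refine Finset.sum_le_sum fun x _ => ?_
          calc f x * majority K x ≤ f x * 1 :=
                mul_le_mul_of_nonneg_left (majority_le_one K x) (hf0 x)
            _ = f x := mul_one _
            _ ≤ 1 := (hf01 x).2
      _ = (2:ℝ) ^ Fintype.card (Fin n) := by
          rw [Finset.sum_const, Finset.card_univ, nsmul_eq_mul, mul_one]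
          norm_cast
          rw [Fintype.card_fun, Fintype.card_bool]
  set L := - Real.log ε with hLdef
  have hL0 : 0 ≤ L := by
    rw [hLdef]
    exact neg_nonneg.2 (Real.log_nonpos hpos.le hε1)
  set Nr := (K.card : ℝ) with hNrdef
  have hNr1 : 1 ≤ Nr := by rw [hNrdef]; exact_mod_cast hN1
  have hsL : 0 ≤ Real.sqrt L := Real.sqrt_nonneg L
  set T := Real.sqrt (2*Nr) * (1 + Real.sqrt L) with hTdef
  have hT0 : 0 < T := by
    rw [hTdef]
    exact mul_pos (Real.sqrt_pos.2 (by linarith)) (by linarith)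
  have hT2 : T^2 = 2*Nr*(1 + Real.sqrt L)^2 := by
    rw [hTdef, mul_pow, Real.sq_sqrt (by linarith : (0:ℝ) ≤ 2*Nr)]
  set l := T / Nr with hldef
  have hl0 : 0 < l := div_pos hT0 (by linarith)
  -- tail bound
  have htail : ∑ x : Cube n, (if T < |∑ j ∈ K, eps j x| then |∑ j ∈ K, eps j x| else 0)
      ≤ 4 * T * ε * D := by
    have hstep1 : ∑ x : Cube n, (if T < |∑ j ∈ K, eps j x| then |∑ j ∈ K, eps j x| else 0)
        ≤ ∑ x : Cube n, (T + 1/l) *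
            (Real.exp (l * ((∑ j ∈ K, eps j x) - T)) + Real.exp (l * (-(∑ j ∈ K, eps j x) - T))) :=
      Finset.sum_le_sum fun x _ => chernoff_pointwise T l _ hT0.le hl0
    have hre : ∀ a : ℝ, Real.exp (l * (a - T)) = Real.exp (-(l*T)) * Real.exp (l * a) := by
      intro a
      rw [← Real.exp_add]
      congr 1
      ring
    have hre2 : ∀ a : ℝ, Real.exp (l * (-a - T)) = Real.exp (-(l*T)) * Real.exp ((-l) * a) := by
      intro a
      rw [← Real.exp_add]
      congr 1
      ring
    have hstep2 : ∑ x : Cube n, (T + 1/l) *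
            (Real.exp (l * ((∑ j ∈ K, eps j x) - T)) + Real.exp (l * (-(∑ j ∈ K, eps j x) - T)))
        = (T + 1/l) * Real.exp (-(l*T)) * (2 * (D * Real.cosh l ^ K.card)) := by
      have hpt : ∀ x : Cube n, (T + 1/l) *
            (Real.exp (l * ((∑ j ∈ K, eps j x) - T)) + Real.exp (l * (-(∑ j ∈ K, eps j x) - T)))
          = (T + 1/l) * Real.exp (-(l*T)) *
              (Real.exp (l * ∑ j ∈ K, eps j x) + Real.exp ((-l) * ∑ j ∈ K, eps j x)) := by
        intro x
        rw [hre, hre2]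
        ring
      rw [Finset.sum_congr rfl fun x _ => hpt x, ← Finset.mul_sum, Finset.sum_add_distrib]
      rw [sum_exp_eps K l, sum_exp_eps K (-l), Real.cosh_neg]
      rw [← hD]
      ring
    have hch : Real.cosh l ^ K.card ≤ Real.exp (Nr * (l^2/2)) := by
      calc Real.cosh l ^ K.card ≤ (Real.exp (l^2/2)) ^ K.card :=
            pow_le_pow_left₀ (Real.cosh_pos (x := l)).le (Real.cosh_le_exp_half_sq l) K.card
        _ = Real.exp (K.card * (l^2/2)) := (Real.exp_nat_mul _ _).symm
        _ = Real.exp (Nr * (l^2/2)) := by rw [hNrdef]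
    have harg : -(l*T) + Nr * (l^2/2) = -(T^2/(2*Nr)) := by
      rw [hldef]
      field_simp
      ring
    have hεbound : Real.exp (-(l*T)) * Real.exp (Nr * (l^2/2)) ≤ ε := by
      rw [← Real.exp_add, harg]
      have h1 : T^2/(2*Nr) = (1 + Real.sqrt L)^2 := by
        rw [hT2]
        field_simp
      have h2 : L ≤ (1 + Real.sqrt L)^2 := by
        nlinarith [Real.sq_sqrt hL0, hsL]
      have h3 : -(T^2/(2*Nr)) ≤ Real.log ε := by
        rw [h1]
        have : Real.log ε = -L := by rw [hLdef]; ring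
        rw [this]
        linarith
      calc Real.exp (-(T^2/(2*Nr))) ≤ Real.exp (Real.log ε) := Real.exp_le_exp.2 h3
        _ = ε := Real.exp_log hpos
    have hTl2 : T + 1/l ≤ 2*T := by
      rw [hldef, one_div_div]
      have hgeq : (1:ℝ) ≤ (1 + Real.sqrt L)^2 := by nlinarith [hsL]
      have hmul : 2*Nr*1 ≤ 2*Nr*(1 + Real.sqrt L)^2 :=
        mul_le_mul_of_nonneg_left hgeq (by linarith)
      have h1 : Nr ≤ T^2 := by rw [hT2]; linarith
      have h2 : Nr / T ≤ T := by
        rw [div_le_iff₀ hT0]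
        nlinarith [h1]
      linarith
    calc ∑ x : Cube n, (if T < |∑ j ∈ K, eps j x| then |∑ j ∈ K, eps j x| else 0)
        ≤ (T + 1/l) * Real.exp (-(l*T)) * (2 * (D * Real.cosh l ^ K.card)) := by
          rw [← hstep2]; exact hstep1
      _ ≤ (2*T) * Real.exp (-(l*T)) * (2 * (D * Real.exp (Nr * (l^2/2)))) := by
          have e1 : (0:ℝ) < Real.exp (-(l*T)) := Real.exp_pos _
          have e2 : (0:ℝ) ≤ Real.cosh l ^ K.card := (pow_pos (Real.cosh_pos l) _).le
          have h5 : (T + 1/l) * Real.exp (-(l*T)) ≤ (2*T) * Real.exp (-(l*T)) :=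
            mul_le_mul_of_nonneg_right hTl2 e1.le
          have h6 : (2:ℝ) * (D * Real.cosh l ^ K.card) ≤ 2 * (D * Real.exp (Nr * (l^2/2))) := by
            have := mul_le_mul_of_nonneg_left hch hD0.le
            linarith
          have h7 : (0:ℝ) ≤ (T + 1/l) * Real.exp (-(l*T)) := by positivity
          have h8 : (0:ℝ) ≤ 2 * (D * Real.cosh l ^ K.card) := by positivity
          exact mul_le_mul h5 h6 h8 (by positivity)
      _ = 4 * T * D * (Real.exp (-(l*T)) * Real.exp (Nr * (l^2/2))) := by ring
      _ ≤ 4 * T * D * ε := by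
          refine mul_le_mul_of_nonneg_left hεbound ?_
          positivity
      _ = 4 * T * ε * D := by ring
  -- apply the core inequality
  have hcore := main_core K f hmono hf01 T hT0.le
  have hεraw : ∑ x : Cube n, f x * majority K x = ε * D := by
    have : ε = (∑ x : Cube n, f x * majority K x) / D := by rw [hεdef]; rfl
    rw [this]
    field_simp
  have hRaw : ∑ x : Cube n, f x * (∑ j ∈ K, eps j x) ≤ 5 * T * ε * D := by
    calc ∑ x : Cube n, f x * (∑ j ∈ K, eps j x)
        ≤ T * ∑ x : Cube n, f x * majority K x
          + ∑ x : Cube n, (if T < |∑ j ∈ K, eps j x| then |∑ j ∈ K, eps j x| else 0) := hcore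
      _ ≤ T * (ε * D) + 4 * T * ε * D := by rw [hεraw]; linarith [htail]
      _ = 5 * T * ε * D := by ring
  rw [sum_influence_eq K f hmono]
  have hcex : cexpect (fun x => f x * ∑ j ∈ K, eps j x) ≤ 5 * T * ε := by
    unfold cexpect
    rw [div_le_iff₀ (by positivity)]
    calc ∑ x : Cube n, f x * (∑ j ∈ K, eps j x) ≤ 5 * T * ε * D := hRaw
      _ = 5 * T * ε * 2 ^ Fintype.card (Fin n) := by rw [hD]
  have hTb : T ≤ (3/2) * Real.sqrt Nr * (1 + Real.sqrt L) := by
    rw [hTdef]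
    have h2 : Real.sqrt (2*Nr) = Real.sqrt 2 * Real.sqrt Nr :=
      Real.sqrt_mul (by norm_num) Nr
    have h3 : Real.sqrt 2 ≤ 3/2 := by
      nlinarith [Real.sq_sqrt (show (0:ℝ) ≤ 2 by norm_num), Real.sqrt_nonneg 2]
    rw [h2]
    have h4 : (0:ℝ) ≤ Real.sqrt Nr * (1 + Real.sqrt L) := by positivity
    nlinarith [h4, Real.sqrt_nonneg Nr]
  calc 2 * cexpect (fun x => f x * ∑ j ∈ K, eps j x) ≤ 2 * (5 * T * ε) := by linarith
    _ = 10 * T * ε := by ring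
    _ ≤ 10 * ((3/2) * Real.sqrt Nr * (1 + Real.sqrt L)) * ε := by
        have := mul_le_mul_of_nonneg_right hTb hpos.le
        nlinarith [this]
    _ = 15 * Real.sqrt Nr * ε * (1 + Real.sqrt L) := by ring

end BKS
end
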